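/- arXiv:math/0602165 — 5 statements merged into one kernel-verified Lean document; each statement's English description precedes it below -/
import Mathlib

section
/- (Tits) Let (W,S) be a Coxeter system, of arbitrary (possibly infinite) rank. Every finite subgroup of W is contained in a finite parabolic subgroup of W: for every finite subgroup H ≤ W there exist w ∈ W and I ⊆ S such that the standard parabolic subgroup W_I is finite and H ⊆ w W_I w⁻¹. -/
/-!
`W` acts on `V = ⊕_{s ∈ S} ℝ α_s` through the geometric representation, preserving the cosine
form `B(α_s, α_t) = -cos (π / m(s,t))`. Every root `w α_s` is either nonnegative or nonpositive,
and it is nonnegative exactly when `ℓ(w s) > ℓ(w)`. Hence the inversion set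
`N(w) = {α > 0 | w α ≤ 0}` is finite, and it determines `w`.

For a finite subgroup `H`, let `g(x)` be the sum over `h ∈ H` of the coordinate sums of `h x`.
This functional is `H`-invariant and positive on every positive root outside the finite set
`⋃_{h ∈ H} N(h u)`, so a descent along the simple roots on which `g ∘ u` is negative ends at
some `u` for which `f = g ∘ u` is nonnegative on all `α_s`. Then `u⁻¹ H u` fixes `f`, and the
stabiliser of such an `f` lies in the standard parabolic subgroup `W_I`, `I = {s | f α_s = 0}`.
This `W_I` is finite because the inversion sets of its elements lie in the finite set of
positive roots killed by `f`.
-/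

open Real Polynomial.Chebyshev
open Finsupp (single)

theorem Real.sin_pi_div_pos_of_two_le {m : ℕ} (hm : 2 ≤ m) : 0 < sin (π / m) := by
  have hm' : (2 : ℝ) ≤ m := by exact_mod_cast hm
  apply sin_pos_of_pos_of_lt_pi (by positivity)
  rw [div_lt_iff₀ (by positivity)]
  nlinarith [pi_pos]

namespace Polynomial.Chebyshev

theorem U_eval_cos_pi_div_nonneg {m : ℕ} {n : ℤ} (hm : m ≠ 1) (hn : -1 ≤ n)
    (h : m = 0 ∨ n < m) : 0 ≤ (U ℝ n).eval (cos (π / m)) := by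
  obtain rfl | hm2 : m = 0 ∨ 2 ≤ m := by omega
  · rw [Nat.cast_zero, div_zero, cos_zero, U_eval_one]
    have : (0 : ℤ) ≤ n + 1 := by omega
    exact_mod_cast this
  replace h : n < m := h.resolve_left (by omega)
  have hsin := sin_pi_div_pos_of_two_le hm2
  refine nonneg_of_mul_nonneg_left ?_ hsin
  rw [U_real_cos]
  apply sin_nonneg_of_nonneg_of_le_pi
  · have : (0 : ℤ) ≤ n + 1 := by omega
    have : (0 : ℝ) ≤ n + 1 := by exact_mod_cast this
    positivity
  · have : (n : ℝ) + 1 ≤ m := by exact_mod_cast (by omega : n + 1 ≤ (m : ℤ))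
    calc (n + 1) * (π / m) ≤ m * (π / m) := by gcongr
      _ = π := mul_div_cancel₀ π (Nat.cast_ne_zero.2 (by omega))

theorem U_eval_cos_pi_div_two_mul {m : ℕ} (hm : 2 ≤ m) :
    (U ℝ (2 * m)).eval (cos (π / m)) = 1 := by
  have hsin := (sin_pi_div_pos_of_two_le hm).ne'
  refine mul_right_cancel₀ hsin ?_
  rw [U_real_cos, one_mul]
  push_cast
  rw [show (2 * m + 1 : ℝ) * (π / m) = π / m + 2 * π by field_simp; ring, sin_add_two_pi]

theorem U_eval_cos_pi_div_two_mul_sub_one {m : ℕ} (hm : 2 ≤ m) :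
    (U ℝ (2 * m - 1)).eval (cos (π / m)) = 0 := by
  refine (mul_eq_zero.1 ?_).resolve_right (sin_pi_div_pos_of_two_le hm).ne'
  rw [U_real_cos]
  push_cast
  rw [show (2 * m - 1 + 1 : ℝ) * (π / m) = 2 * π by field_simp; ring, sin_two_pi]

end Polynomial.Chebyshev

namespace Finsupp

variable {ι : Type*}

theorem linearMap_apply_eq_sum (f : (ι →₀ ℝ) →ₗ[ℝ] ℝ) (x : ι →₀ ℝ) :
    f x = x.sum fun i r => r * f (single i 1) := by
  conv_lhs => rw [← x.sum_single]
  rw [map_finsuppSum]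
  refine Finsupp.sum_congr fun i _ => ?_
  rw [← smul_single_one, map_smul, smul_eq_mul]

theorem linearMap_apply_nonneg (f : (ι →₀ ℝ) →ₗ[ℝ] ℝ) (hf : ∀ i, 0 ≤ f (single i 1))
    {x : ι →₀ ℝ} (hx : 0 ≤ x) : 0 ≤ f x := by
  rw [linearMap_apply_eq_sum]
  exact Finset.sum_nonneg fun i _ => mul_nonneg (hx i) (hf i)

theorem linearMap_apply_pos (f : (ι →₀ ℝ) →ₗ[ℝ] ℝ) (hf : ∀ i, 0 < f (single i 1))
    {x : ι →₀ ℝ} (hx : 0 ≤ x) (hx0 : x ≠ 0) : 0 < f x := by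
  rw [linearMap_apply_eq_sum]
  obtain ⟨i, hi⟩ := Finsupp.ne_iff.1 hx0
  exact Finset.sum_pos' (fun j _ => mul_nonneg (hx j) (hf j).le)
    ⟨i, Finsupp.mem_support_iff.2 hi, mul_pos ((hx i).lt_of_ne' hi) (hf i)⟩

end Finsupp

namespace CoxeterSystem

variable {B : Type*}

theorem alternatingWord_two_mul_add_one (i j : B) (k : ℕ) :
    alternatingWord i j (2 * k + 1) = j :: alternatingWord i j (2 * k) := by
  simp [alternatingWord_succ']

theorem alternatingWord_two_mul_add_two (i j : B) (k : ℕ) :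
    alternatingWord i j (2 * k + 2) = i :: j :: alternatingWord i j (2 * k) := by
  rw [alternatingWord_succ', alternatingWord_two_mul_add_one]
  simp

theorem prod_map_alternatingWord_two_mul {G : Type*} [Monoid G] (f : B → G) (i j : B) (k : ℕ) :
    ((alternatingWord i j (2 * k)).map f).prod = (f i * f j) ^ k := by
  induction k with
  | zero => simp [alternatingWord]
  | succ k ih =>
    rw [Nat.mul_succ, alternatingWord_two_mul_add_two]
    simp [ih, pow_succ', mul_assoc]

section Length

variable {W : Type*} [Group W] {M : CoxeterMatrix B} (cs : CoxeterSystem M W)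

theorem length_mul_wordProd_le (v : W) (ω : List B) :
    cs.length (v * cs.wordProd ω) ≤ cs.length v + ω.length :=
  (cs.length_mul_le _ _).trans (Nat.add_le_add_left (cs.length_wordProd_le ω) _)

theorem isRightDescent_mul_wordProd_alternatingWord {v : W} {i j : B} {q : ℕ}
    (h : cs.length (v * cs.wordProd (alternatingWord i j (q + 1))) = cs.length v + (q + 1)) :
    cs.IsRightDescent (v * cs.wordProd (alternatingWord i j (q + 1))) j := by
  have hle := cs.length_mul_wordProd_le v (alternatingWord j i q)
  rw [length_alternatingWord] at hle
  rw [IsRightDescent, h, alternatingWord_succ, wordProd_concat, ← mul_assoc,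
    simple_mul_simple_cancel_right]
  omega

theorem eq_mul_wordProd_alternatingWord_succ {w v : W} {i j : B} {q : ℕ}
    (hw : cs.IsRightDescent w j) (hl : cs.length (w * cs.simple j) = cs.length v + q)
    (h : w * cs.simple j = v * cs.wordProd (alternatingWord i j q) ∨
      w * cs.simple j = v * cs.wordProd (alternatingWord j i q)) :
    w = v * cs.wordProd (alternatingWord i j (q + 1)) := by
  replace h : w * cs.simple j = v * cs.wordProd (alternatingWord j i q) := by
    rcases h with h | h
    · cases q with
      | zero => simpa [alternatingWord] using h
      | succ q =>
        have := cs.isRightDescent_mul_wordProd_alternatingWord (h ▸ hl)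
        exact absurd (h ▸ this) (cs.isRightDescent_iff_not_isRightDescent_mul.1 hw)
    · exact h
  rw [alternatingWord_succ, wordProd_concat, ← mul_assoc, ← h, simple_mul_simple_cancel_right]

theorem exists_eq_mul_wordProd_alternatingWord (i j : B) (w : W) :
    ∃ (v : W) (q : ℕ), ¬cs.IsRightDescent v i ∧ ¬cs.IsRightDescent v j ∧
      cs.length w = cs.length v + q ∧
      (w = v * cs.wordProd (alternatingWord i j q) ∨
        w = v * cs.wordProd (alternatingWord j i q)) := by
  generalize hn : cs.length w = n
  induction n using Nat.strong_induction_on generalizing w with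
  | _ n ih =>
  by_cases hi : cs.IsRightDescent w i
  · have hl := cs.isRightDescent_iff.1 hi
    obtain ⟨v, q, hvi, hvj, hl', h⟩ := ih _ (by omega) (w * cs.simple i) rfl
    exact ⟨v, q + 1, hvi, hvj, by omega,
      Or.inr (cs.eq_mul_wordProd_alternatingWord_succ hi hl' h.symm)⟩
  by_cases hj : cs.IsRightDescent w j
  · have hl := cs.isRightDescent_iff.1 hj
    obtain ⟨v, q, hvi, hvj, hl', h⟩ := ih _ (by omega) (w * cs.simple j) rfl
    exact ⟨v, q + 1, hvi, hvj, by omega,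
      Or.inl (cs.eq_mul_wordProd_alternatingWord_succ hj hl' h)⟩
  exact ⟨w, 0, hi, hj, hn.symm, Or.inl (by simp [alternatingWord])⟩

theorem exists_eq_mul_wordProd_alternatingWord_of_isRightDescent {w : W} {i j : B}
    (hi : ¬cs.IsRightDescent w i) (hj : cs.IsRightDescent w j) :
    ∃ (v : W) (q : ℕ), ¬cs.IsRightDescent v i ∧ ¬cs.IsRightDescent v j ∧
      cs.length v < cs.length w ∧ (M i j = 0 ∨ q < M i j) ∧
      w = v * cs.wordProd (alternatingWord i j q) := by
  obtain ⟨v, q, hvi, hvj, hl, hw⟩ := cs.exists_eq_mul_wordProd_alternatingWord i j w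
  have hq : q ≠ 0 := by
    rintro rfl
    simp only [alternatingWord, wordProd_nil, mul_one, or_self] at hw
    exact hvj (hw ▸ hj)
  have not_ji : w ≠ v * cs.wordProd (alternatingWord j i q) := by
    obtain ⟨q, rfl⟩ := Nat.exists_eq_succ_of_ne_zero hq
    rintro rfl
    exact hi (cs.isRightDescent_mul_wordProd_alternatingWord hl)
  replace hw := hw.resolve_right not_ji
  refine ⟨v, q, hvi, hvj, by omega, ?_, hw⟩
  by_contra! hm
  have hred : cs.IsReduced (alternatingWord i j q) := by
    have h₁ := cs.length_mul_le v (cs.wordProd (alternatingWord i j q))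
    have h₂ := cs.length_wordProd_le (alternatingWord i j q)
    rw [← hw] at h₁
    rw [length_alternatingWord] at h₂
    rw [IsReduced, length_alternatingWord]
    omega
  have hqm : q = M i j :=
    le_antisymm (not_lt.1 fun h => cs.not_isReduced_alternatingWord i j hm.1 h hred) hm.2
  -- for `q = M i j` the braid relation rewrites the word into one ending in `i`
  apply not_ji
  have := cs.wordProd_braidWord_eq i j
  rw [braidWord, braidWord, M.symmetric j i, ← hqm] at this
  rw [hw, this]

end Length

end CoxeterSystem

namespace CoxeterMatrix

open CoxeterSystem (alternatingWord)

variable {B : Type*} (M : CoxeterMatrix B)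

/-- An infinite entry is encoded as `M i j = 0`; since `π / 0 = 0`, the form takes the value
`-cos 0 = -1` there, as it should. -/
noncomputable def cosineForm : (B →₀ ℝ) →ₗ[ℝ] (B →₀ ℝ) →ₗ[ℝ] ℝ :=
  Finsupp.linearCombination ℝ fun i => Finsupp.linearCombination ℝ fun j => -cos (π / M i j)

theorem cosineForm_single_single (i j : B) :
    M.cosineForm (single i 1) (single j 1) = -cos (π / M i j) := by
  simp [cosineForm]

theorem cosineForm_single_self (i : B) : M.cosineForm (single i 1) (single i 1) = 1 := by
  simp [cosineForm_single_single]

theorem cosineForm_comm (x y : B →₀ ℝ) : M.cosineForm x y = M.cosineForm y x := by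
  have : M.cosineForm.flip = M.cosineForm := by
    ext i j
    simp [cosineForm_single_single, M.symmetric i j]
  exact (LinearMap.congr_fun₂ this x y).symm

noncomputable def reflection (i : B) : (B →₀ ℝ) ≃ₗ[ℝ] (B →₀ ℝ) :=
  Module.reflection (x := single i 1) (f := (2 : ℝ) • M.cosineForm (single i 1))
    (by simp [cosineForm_single_self])

theorem reflection_apply (i : B) (v : B →₀ ℝ) :
    M.reflection i v = v - (2 * M.cosineForm (single i 1) v) • single i 1 := by
  rw [reflection, Module.reflection_apply, LinearMap.smul_apply, smul_eq_mul]

@[simp]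
theorem reflection_single_self (i : B) : M.reflection i (single i 1) = -single i 1 :=
  Module.reflection_apply_self _

@[simp]
theorem reflection_reflection (i : B) (v : B →₀ ℝ) : M.reflection i (M.reflection i v) = v :=
  Module.involutive_reflection _ v

@[simp]
theorem reflection_symm (i : B) : (M.reflection i).symm = M.reflection i :=
  rfl

@[simp]
theorem reflection_inv (i : B) : (M.reflection i)⁻¹ = M.reflection i :=
  rfl

theorem reflection_mul_self (i : B) : M.reflection i * M.reflection i = 1 :=
  LinearEquiv.ext (M.reflection_reflection i)

theorem reflection_apply_of_cosineForm_eq_zero {i : B} {v : B →₀ ℝ}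
    (h : M.cosineForm (single i 1) v = 0) : M.reflection i v = v := by
  simp [reflection_apply, h]

theorem apply_reflection_of_apply_single_eq_zero {f : (B →₀ ℝ) →ₗ[ℝ] ℝ} {i : B}
    (h : f (single i 1) = 0) (x : B →₀ ℝ) : f (M.reflection i x) = f x := by
  rw [reflection_apply, map_sub, map_smul, h, smul_zero, sub_zero]

theorem cosineForm_reflection_reflection (i : B) (x y : B →₀ ℝ) :
    M.cosineForm (M.reflection i x) (M.reflection i y) = M.cosineForm x y := by
  simp only [reflection_apply, map_sub, map_smul, LinearMap.sub_apply, LinearMap.smul_apply,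
    smul_eq_mul, cosineForm_single_self, M.cosineForm_comm x (single i 1)]
  ring

theorem reflection_smul_add_smul_left (i j : B) (a b : ℝ) :
    M.reflection i (a • single i 1 + b • single j 1)
      = (2 * cos (π / M i j) * b - a) • single i 1 + b • single j 1 := by
  simp only [reflection_apply, map_add, map_smul, cosineForm_single_self,
    cosineForm_single_single]
  module

theorem reflection_smul_add_smul_right (i j : B) (a b : ℝ) :
    M.reflection j (a • single i 1 + b • single j 1)
      = a • single i 1 + (2 * cos (π / M i j) * a - b) • single j 1 := by
  simp only [reflection_apply, map_add, map_smul, cosineForm_single_self,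
    cosineForm_single_single, M.symmetric j i]
  module

theorem prod_map_reflection_alternatingWord_two_mul_apply (i j : B) (k : ℕ) :
    ((alternatingWord i j (2 * k)).map M.reflection).prod (single i 1)
      = (U ℝ (2 * k)).eval (cos (π / M i j)) • single i 1
        + (U ℝ (2 * k - 1)).eval (cos (π / M i j)) • single j 1 := by
  induction k with
  | zero => simp [alternatingWord]
  | succ k ih =>
    rw [Nat.mul_succ, CoxeterSystem.alternatingWord_two_mul_add_two, List.map_cons, List.map_cons,
      List.prod_cons, List.prod_cons, LinearEquiv.mul_apply, LinearEquiv.mul_apply, ih,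
      reflection_smul_add_smul_right, reflection_smul_add_smul_left]
    push_cast
    rw [show 2 * ((k : ℤ) + 1) - 1 = 2 * k + 1 by ring, show 2 * ((k : ℤ) + 1) = 2 * k + 2 by ring,
      U_add_two, U_add_one]
    simp only [Polynomial.eval_sub, Polynomial.eval_mul, Polynomial.eval_ofNat, Polynomial.eval_X]

theorem prod_map_reflection_alternatingWord_two_mul_add_one_apply (i j : B) (k : ℕ) :
    ((alternatingWord i j (2 * k + 1)).map M.reflection).prod (single i 1)
      = (U ℝ (2 * k)).eval (cos (π / M i j)) • single i 1
        + (U ℝ (2 * k + 1)).eval (cos (π / M i j)) • single j 1 := by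
  rw [CoxeterSystem.alternatingWord_two_mul_add_one, List.map_cons, List.prod_cons,
    LinearEquiv.mul_apply, prod_map_reflection_alternatingWord_two_mul_apply,
    reflection_smul_add_smul_right, U_add_one]
  simp only [Polynomial.eval_sub, Polynomial.eval_mul, Polynomial.eval_ofNat, Polynomial.eval_X]

theorem exists_nonneg_prod_map_reflection_alternatingWord_apply {i j : B} (hij : i ≠ j) {q : ℕ}
    (hq : M i j = 0 ∨ q < M i j) :
    ∃ a b : ℝ, 0 ≤ a ∧ 0 ≤ b ∧ ((alternatingWord i j q).map M.reflection).prod (single i 1)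
      = a • single i 1 + b • single j 1 := by
  have hU (n : ℤ) (h₁ : -1 ≤ n) (h₂ : n ≤ q) : 0 ≤ (U ℝ n).eval (cos (π / M i j)) :=
    U_eval_cos_pi_div_nonneg (M.off_diagonal i j hij) h₁ (by omega)
  obtain ⟨k, rfl | rfl⟩ := Nat.even_or_odd' q
  · exact ⟨_, _, hU _ (by omega) (by omega), hU _ (by omega) (by omega),
      M.prod_map_reflection_alternatingWord_two_mul_apply i j k⟩
  · exact ⟨_, _, hU _ (by omega) (by omega), hU _ (by omega) (by push_cast; omega),
      M.prod_map_reflection_alternatingWord_two_mul_add_one_apply i j k⟩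

theorem reflection_mul_reflection_pow_apply_single {i j : B} (hm : 2 ≤ M i j) :
    ((M.reflection i * M.reflection j) ^ M i j) (single i 1) = single i 1 := by
  rw [← CoxeterSystem.prod_map_alternatingWord_two_mul,
    prod_map_reflection_alternatingWord_two_mul_apply, U_eval_cos_pi_div_two_mul hm,
    U_eval_cos_pi_div_two_mul_sub_one hm, one_smul, zero_smul, add_zero]

theorem exists_eq_smul_add_smul_add {i j : B} (hm : 2 ≤ M i j) (v : B →₀ ℝ) :
    ∃ (a b : ℝ) (u : B →₀ ℝ), v = a • single i 1 + b • single j 1 + u ∧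
      M.cosineForm (single i 1) u = 0 ∧ M.cosineForm (single j 1) u = 0 := by
  set c := cos (π / M i j) with hc
  have hc2 : 1 - c ^ 2 ≠ 0 := by
    rw [hc, ← sin_sq]
    exact (pow_pos (sin_pi_div_pos_of_two_le hm) 2).ne'
  set x := M.cosineForm (single i 1) v with hx
  set y := M.cosineForm (single j 1) v with hy
  -- Cramer's rule for the Gram matrix `!![1, -c; -c, 1]` of the two simple roots
  refine ⟨(x + c * y) / (1 - c ^ 2), (y + c * x) / (1 - c ^ 2), _, (add_sub_cancel _ v).symm,
    ?_, ?_⟩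
  all_goals
    simp only [map_sub, map_add, map_smul, cosineForm_single_single, smul_eq_mul, M.symmetric j i,
      M.diagonal, Nat.cast_one, div_one, cos_pi, neg_neg, ← hc, ← hx, ← hy]
    field_simp
    ring

theorem reflection_mul_reflection_pow_eq_one {i j : B} (hm : 2 ≤ M i j) :
    (M.reflection i * M.reflection j) ^ M i j = 1 := by
  have hi := M.reflection_mul_reflection_pow_apply_single hm
  have hj : ((M.reflection i * M.reflection j) ^ M i j) (single j 1) = single j 1 := by
    have h := M.reflection_mul_reflection_pow_apply_single (i := j) (j := i) (M.symmetric i j ▸ hm)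
    rw [M.symmetric j i] at h
    rw [← inv_inv (M.reflection i * M.reflection j), inv_pow, mul_inv_rev, reflection_inv,
      reflection_inv, LinearEquiv.coe_inv, LinearEquiv.symm_apply_eq, h]
  ext1 v
  obtain ⟨a, b, u, rfl, hui, huj⟩ := M.exists_eq_smul_add_smul_add hm v
  have hu : (M.reflection i * M.reflection j) u = u := by
    rw [LinearEquiv.mul_apply, M.reflection_apply_of_cosineForm_eq_zero huj,
      M.reflection_apply_of_cosineForm_eq_zero hui]
  rw [map_add, map_add, map_smul, map_smul, hi, hj, LinearEquiv.pow_apply,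
    Function.iterate_fixed hu, LinearEquiv.coe_one, id]

theorem isLiftable_reflection : M.IsLiftable M.reflection := by
  intro i j
  rcases eq_or_ne i j with rfl | hij
  · rw [M.diagonal, pow_one, reflection_mul_self]
  rcases Nat.eq_zero_or_pos (M i j) with h0 | hpos
  · rw [h0, pow_zero]
  exact M.reflection_mul_reflection_pow_eq_one (by have := M.off_diagonal i j hij; omega)

end CoxeterMatrix

namespace CoxeterSystem

open CoxeterMatrix

variable {B W : Type*} [Group W] {M : CoxeterMatrix B} (cs : CoxeterSystem M W)

noncomputable def geometricRepresentation : W →* (B →₀ ℝ) ≃ₗ[ℝ] (B →₀ ℝ) :=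
  cs.lift ⟨M.reflection, M.isLiftable_reflection⟩

local notation "ρ" => cs.geometricRepresentation

@[simp]
theorem geometricRepresentation_simple (i : B) : ρ (cs.simple i) = M.reflection i :=
  cs.lift_apply_simple M.isLiftable_reflection i

theorem geometricRepresentation_wordProd (ω : List B) :
    ρ (cs.wordProd ω) = (ω.map M.reflection).prod := by
  simp [wordProd, map_list_prod, Function.comp_def]

theorem geometricRepresentation_mul_simple_apply (w : W) (i : B) (x : B →₀ ℝ) :
    ρ (w * cs.simple i) x = ρ w (M.reflection i x) := by
  simp

theorem cosineForm_geometricRepresentation (w : W) (x y : B →₀ ℝ) :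
    M.cosineForm (ρ w x) (ρ w y) = M.cosineForm x y := by
  induction w using cs.simple_induction_left with
  | one => simp
  | mul_simple_left w i ih => simp [cosineForm_reflection_reflection, ih]

theorem geometricRepresentation_single_nonneg {w : W} {i : B} (h : ¬cs.IsRightDescent w i) :
    0 ≤ ρ w (single i 1) := by
  generalize hn : cs.length w = n
  induction n using Nat.strong_induction_on generalizing w i with
  | _ n ih =>
  rcases eq_or_ne w 1 with rfl | hw
  · simp
  obtain ⟨j, hj⟩ := cs.exists_rightDescent_of_ne_one hw
  have hij : i ≠ j := by rintro rfl; exact h hj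
  obtain ⟨v, q, hvi, hvj, hlt, hq, rfl⟩ :=
    cs.exists_eq_mul_wordProd_alternatingWord_of_isRightDescent h hj
  obtain ⟨a, b, ha, hb, hab⟩ := M.exists_nonneg_prod_map_reflection_alternatingWord_apply hij hq
  rw [map_mul, LinearEquiv.mul_apply, geometricRepresentation_wordProd, hab, map_add, map_smul,
    map_smul]
  exact add_nonneg (smul_nonneg ha (ih _ (hn ▸ hlt) hvi rfl))
    (smul_nonneg hb (ih _ (hn ▸ hlt) hvj rfl))

theorem geometricRepresentation_single_nonpos {w : W} {i : B} (h : cs.IsRightDescent w i) :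
    ρ w (single i 1) ≤ 0 := by
  have := cs.geometricRepresentation_single_nonneg
    (cs.isRightDescent_iff_not_isRightDescent_mul.1 h)
  rwa [geometricRepresentation_mul_simple_apply, reflection_single_self, map_neg,
    neg_nonneg] at this

def IsRoot (x : B →₀ ℝ) : Prop :=
  ∃ (w : W) (i : B), ρ w (single i 1) = x

def positiveRoots : Set (B →₀ ℝ) :=
  {x | cs.IsRoot x ∧ 0 ≤ x}

theorem isRoot_single (i : B) : cs.IsRoot (single i 1) :=
  ⟨1, i, by simp⟩

theorem single_mem_positiveRoots (i : B) : single i 1 ∈ cs.positiveRoots :=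
  ⟨cs.isRoot_single i, Finsupp.single_nonneg.2 zero_le_one⟩

variable {cs}

theorem IsRoot.geometricRepresentation_apply {x : B →₀ ℝ} (h : cs.IsRoot x) (w : W) :
    cs.IsRoot (ρ w x) := by
  obtain ⟨v, i, rfl⟩ := h
  exact ⟨w * v, i, by simp⟩

theorem IsRoot.ne_zero {x : B →₀ ℝ} (h : cs.IsRoot x) : x ≠ 0 := by
  obtain ⟨w, i, rfl⟩ := h
  simp

theorem IsRoot.cosineForm_self {x : B →₀ ℝ} (h : cs.IsRoot x) : M.cosineForm x x = 1 := by
  obtain ⟨w, i, rfl⟩ := h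
  rw [cosineForm_geometricRepresentation, cosineForm_single_self]

theorem IsRoot.nonneg_or_nonpos {x : B →₀ ℝ} (h : cs.IsRoot x) : 0 ≤ x ∨ x ≤ 0 := by
  obtain ⟨w, i, rfl⟩ := h
  by_cases hd : cs.IsRightDescent w i
  exacts [Or.inr (cs.geometricRepresentation_single_nonpos hd),
    Or.inl (cs.geometricRepresentation_single_nonneg hd)]

theorem IsRoot.nonneg_of_not_nonpos {x : B →₀ ℝ} (h : cs.IsRoot x) (hx : ¬x ≤ 0) : 0 ≤ x :=
  h.nonneg_or_nonpos.resolve_right hx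

theorem IsRoot.not_nonpos_of_nonneg {x : B →₀ ℝ} (h : cs.IsRoot x) (hx : 0 ≤ x) : ¬x ≤ 0 :=
  fun hx' => h.ne_zero (le_antisymm hx' hx)

variable (cs)

theorem isRightDescent_iff_geometricRepresentation_single_nonpos {w : W} {i : B} :
    cs.IsRightDescent w i ↔ ρ w (single i 1) ≤ 0 := by
  refine ⟨cs.geometricRepresentation_single_nonpos, fun h => ?_⟩
  by_contra hd
  exact ((cs.isRoot_single i).geometricRepresentation_apply w).not_nonpos_of_nonneg
    (cs.geometricRepresentation_single_nonneg hd) h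

theorem exists_pos_apply_of_mem_positiveRoots {x : B →₀ ℝ} (hx : x ∈ cs.positiveRoots) {i : B}
    (hxi : x ≠ single i 1) : ∃ b ≠ i, 0 < x b := by
  by_contra! h
  have hx' : x = x i • single i 1 := by
    ext b
    rcases eq_or_ne b i with rfl | hb
    · rw [Finsupp.smul_apply, Finsupp.single_eq_same, smul_eq_mul, mul_one]
    · rw [Finsupp.smul_apply, Finsupp.single_eq_of_ne hb, smul_zero]
      exact le_antisymm (h b hb) (hx.2 b)
  have hsq := hx.1.cosineForm_self
  rw [hx'] at hsq
  simp only [map_smul, LinearMap.smul_apply, cosineForm_single_self, smul_eq_mul, mul_one] at hsq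
  have hxi0 : 0 ≤ x i := hx.2 i
  have : x i = 1 := by nlinarith
  exact hxi (by rw [hx', this, one_smul])

theorem reflection_mem_positiveRoots_sdiff {i : B} {x : B →₀ ℝ}
    (hx : x ∈ cs.positiveRoots \ {single i 1}) :
    M.reflection i x ∈ cs.positiveRoots \ {single i 1} := by
  obtain ⟨b, hbi, hb⟩ := cs.exists_pos_apply_of_mem_positiveRoots hx.1 hx.2
  have hcoord : M.reflection i x b = x b := by
    simp [reflection_apply, Finsupp.single_eq_of_ne hbi]
  have hroot : cs.IsRoot (M.reflection i x) := by
    simpa using hx.1.1.geometricRepresentation_apply (cs.simple i)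
  refine ⟨⟨hroot, hroot.nonneg_of_not_nonpos fun h => ?_⟩, fun h => ?_⟩
  · have : M.reflection i x b ≤ 0 := h b
    linarith
  · rw [Set.mem_singleton_iff.1 h, Finsupp.single_eq_of_ne hbi] at hcoord
    exact hb.ne hcoord

theorem reflection_mem_positiveRoots_sdiff_iff {i : B} {x : B →₀ ℝ} :
    M.reflection i x ∈ cs.positiveRoots \ {single i 1} ↔ x ∈ cs.positiveRoots \ {single i 1} :=
  ⟨fun h => by simpa using cs.reflection_mem_positiveRoots_sdiff h,
    cs.reflection_mem_positiveRoots_sdiff⟩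

theorem image_reflection_sep_positiveRoots_sdiff (i : B) (P : (B →₀ ℝ) → Prop) :
    M.reflection i '' ({x ∈ cs.positiveRoots | P x} \ {single i 1}) =
      {x ∈ cs.positiveRoots | P (M.reflection i x)} \ {single i 1} := by
  ext x
  have := cs.reflection_mem_positiveRoots_sdiff_iff (i := i) (x := x)
  simp only [LinearEquiv.image_eq_preimage_symm, reflection_symm, Set.mem_preimage,
    Set.mem_sdiff, Set.mem_sep_iff] at this ⊢
  tauto

def inversionSet (w : W) : Set (B →₀ ℝ) :=
  {x ∈ cs.positiveRoots | ρ w x ≤ 0}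

theorem inversionSet_one : cs.inversionSet 1 = ∅ :=
  Set.eq_empty_iff_forall_notMem.2 fun x hx =>
    hx.1.1.not_nonpos_of_nonneg hx.1.2 (by simpa using hx.2)

theorem single_mem_inversionSet_iff {w : W} {i : B} :
    single i 1 ∈ cs.inversionSet w ↔ cs.IsRightDescent w i := by
  rw [isRightDescent_iff_geometricRepresentation_single_nonpos]
  exact and_iff_right (cs.single_mem_positiveRoots i)

theorem inversionSet_mul_simple_sdiff (w : W) (i : B) :
    cs.inversionSet (w * cs.simple i) \ {single i 1} =
      M.reflection i '' (cs.inversionSet w \ {single i 1}) := by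
  simp only [inversionSet, image_reflection_sep_positiveRoots_sdiff,
    geometricRepresentation_mul_simple_apply]

theorem inversionSet_mul_simple_of_isRightDescent {w : W} {i : B} (h : cs.IsRightDescent w i) :
    cs.inversionSet (w * cs.simple i) = M.reflection i '' (cs.inversionSet w \ {single i 1}) := by
  rw [← inversionSet_mul_simple_sdiff, Set.sdiff_singleton_eq_self]
  rw [single_mem_inversionSet_iff]
  exact cs.isRightDescent_iff_not_isRightDescent_mul.1 h

theorem finite_inversionSet (w : W) : (cs.inversionSet w).Finite := by
  induction w using cs.simple_induction_right with
  | one => simp [inversionSet_one]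
  | mul_simple_right w i ih =>
    have := Set.subset_insert_sdiff_singleton (single i 1) (cs.inversionSet (w * cs.simple i))
    rw [inversionSet_mul_simple_sdiff] at this
    exact ((ih.sdiff.image _).insert _).subset this

theorem inversionSet_injective : Function.Injective cs.inversionSet := by
  intro w w' h
  generalize hn : cs.length w = n
  induction n using Nat.strong_induction_on generalizing w w' with
  | _ n ih =>
  rcases eq_or_ne w 1 with rfl | hw
  · by_contra hw'
    obtain ⟨i, hi⟩ := cs.exists_rightDescent_of_ne_one (Ne.symm hw')
    have := cs.single_mem_inversionSet_iff.2 hi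
    rw [← h, inversionSet_one] at this
    exact this
  obtain ⟨i, hi⟩ := cs.exists_rightDescent_of_ne_one hw
  have hi' := cs.single_mem_inversionSet_iff.1 (h ▸ cs.single_mem_inversionSet_iff.2 hi)
  have hl := cs.isRightDescent_iff.1 hi
  have := ih _ (by omega) (w := w * cs.simple i) (w' := w' * cs.simple i)
    (by rw [cs.inversionSet_mul_simple_of_isRightDescent hi,
      cs.inversionSet_mul_simple_of_isRightDescent hi', h]) rfl
  simpa using congrArg (· * cs.simple i) this

theorem exists_forall_nonneg_apply_single (f : (B →₀ ℝ) →ₗ[ℝ] ℝ)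
    (hf : ∀ u, {x ∈ cs.positiveRoots | f (ρ u x) < 0}.Finite) :
    ∃ u, ∀ i, 0 ≤ f (ρ u (single i 1)) := by
  set N := fun u => {x ∈ cs.positiveRoots | f (ρ u x) < 0}
  refine ⟨Function.argmin (fun u => (N u).ncard), fun i => not_lt.1 fun hi => ?_⟩
  set u := Function.argmin (fun u => (N u).ncard)
  have hmem : single i 1 ∈ N u := ⟨cs.single_mem_positiveRoots i, hi⟩
  have heq : N (u * cs.simple i) = M.reflection i '' (N u \ {single i 1}) := by
    rw [image_reflection_sep_positiveRoots_sdiff, Set.sdiff_singleton_eq_self]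
    · simp only [N, geometricRepresentation_mul_simple_apply]
    · simp only [Set.mem_sep_iff, reflection_single_self, map_neg, not_and, not_lt]
      exact fun _ => neg_nonneg.2 hi.le
  have hle := Function.argmin_le (fun u => (N u).ncard) (u * cs.simple i)
  rw [heq, Set.ncard_image_of_injective _ (M.reflection i).injective] at hle
  exact (Set.ncard_sdiff_singleton_lt_of_mem hmem (hf u)).not_ge hle

theorem apply_geometricRepresentation_of_mem_closure (f : (B →₀ ℝ) →ₗ[ℝ] ℝ) {w : W}
    (hw : w ∈ Subgroup.closure (cs.simple '' {i | f (single i 1) = 0})) (x : B →₀ ℝ) :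
    f (ρ w x) = f x := by
  induction hw using Subgroup.closure_induction generalizing x with
  | mem _ h =>
    obtain ⟨i, hi, rfl⟩ := h
    simp [M.apply_reflection_of_apply_single_eq_zero hi]
  | one => simp
  | mul a b _ _ ha hb => simp [ha, hb]
  | inv a _ ha => rw [← ha (ρ a⁻¹ x)]; simp

theorem mem_closure_simple_of_forall_apply_eq (f : (B →₀ ℝ) →ₗ[ℝ] ℝ)
    (hf : ∀ i, 0 ≤ f (single i 1)) {w : W} (hw : ∀ x, f (ρ w x) = f x) :
    w ∈ Subgroup.closure (cs.simple '' {i | f (single i 1) = 0}) := by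
  generalize hn : cs.length w = n
  induction n using Nat.strong_induction_on generalizing w with
  | _ n ih =>
  rcases eq_or_ne w 1 with rfl | hw1
  · exact one_mem _
  obtain ⟨i, hi⟩ := cs.exists_leftDescent_of_ne_one hw1
  -- `w⁻¹` sends `α i` to a nonpositive vector, on which `f` is `≤ 0`
  have hfi : f (single i 1) = 0 := by
    have := Finsupp.linearMap_apply_nonneg f hf
      (neg_nonneg.2 (cs.geometricRepresentation_single_nonpos (cs.isRightDescent_inv_iff.2 hi)))
    rw [map_neg, ← hw] at this
    simp only [map_inv, LinearEquiv.coe_inv, LinearEquiv.apply_symm_apply] at this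
    exact le_antisymm (by linarith) (hf i)
  have hsw := ih _ (by rw [IsLeftDescent] at hi; omega) (w := cs.simple i * w)
    (fun x => by simp [hw, M.apply_reflection_of_apply_single_eq_zero hfi]) rfl
  have := mul_mem (Subgroup.subset_closure (Set.mem_image_of_mem cs.simple hfi)) hsw
  rwa [cs.simple_mul_simple_cancel_left] at this

theorem finite_closure_simple (f : (B →₀ ℝ) →ₗ[ℝ] ℝ) (hf : ∀ i, 0 ≤ f (single i 1))
    (hZ : {x ∈ cs.positiveRoots | f x = 0}.Finite) :
    Finite (Subgroup.closure (cs.simple '' {i | f (single i 1) = 0})) := by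
  have hsub (w : Subgroup.closure (cs.simple '' {i | f (single i 1) = 0})) :
      cs.inversionSet w ∈ {S | S ⊆ {x ∈ cs.positiveRoots | f x = 0}} := by
    intro x hx
    have h1 := Finsupp.linearMap_apply_nonneg f hf hx.1.2
    have h2 := Finsupp.linearMap_apply_nonneg f hf (neg_nonneg.2 hx.2)
    rw [map_neg, apply_geometricRepresentation_of_mem_closure cs f w.2] at h2
    exact ⟨hx.1, by linarith⟩
  have := hZ.finite_subsets.to_subtype
  exact Finite.of_injective (fun w => ⟨_, hsub w⟩) fun a b h =>
    Subtype.ext (cs.inversionSet_injective (congrArg Subtype.val h))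

section InvariantFunctional

variable (H : Subgroup W) [Fintype H]

noncomputable def invariantFunctional : (B →₀ ℝ) →ₗ[ℝ] ℝ :=
  ∑ h : H, Finsupp.linearCombination ℝ (fun _ => (1 : ℝ)) ∘ₗ (ρ h).toLinearMap

theorem invariantFunctional_apply (x : B →₀ ℝ) :
    cs.invariantFunctional H x =
      ∑ h : H, Finsupp.linearCombination ℝ (fun _ => (1 : ℝ)) (ρ h x) := by
  simp [invariantFunctional]

theorem invariantFunctional_geometricRepresentation {h : W} (hh : h ∈ H) (x : B →₀ ℝ) :
    cs.invariantFunctional H (ρ h x) = cs.invariantFunctional H x := by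
  rw [invariantFunctional_apply, invariantFunctional_apply]
  exact Fintype.sum_equiv (Equiv.mulRight ⟨h, hh⟩) _ _ fun k => by simp

theorem finite_sep_invariantFunctional_nonpos (u : W) :
    {x ∈ cs.positiveRoots | cs.invariantFunctional H (ρ u x) ≤ 0}.Finite := by
  refine (Set.finite_iUnion fun h : H => cs.finite_inversionSet (h * u)).subset fun x hx => ?_
  by_contra hx'
  simp only [Set.mem_iUnion, not_exists] at hx'
  refine hx.2.not_gt ?_
  rw [invariantFunctional_apply]
  refine Finset.sum_pos (fun h _ => Finsupp.linearMap_apply_pos _ (by simp) ?_ ?_)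
    Finset.univ_nonempty
  · rw [← LinearEquiv.mul_apply, ← map_mul]
    exact (hx.1.1.geometricRepresentation_apply _).nonneg_of_not_nonpos fun hneg =>
      hx' h ⟨hx.1, hneg⟩
  · exact (hx.1.1.geometricRepresentation_apply _).geometricRepresentation_apply _ |>.ne_zero

end InvariantFunctional

end CoxeterSystem

/-- (Tits) Every finite subgroup of a Coxeter group (of arbitrary rank) is contained in a finite
parabolic subgroup, i.e. in a conjugate `w W_I w⁻¹` of a finite standard parabolic
subgroup `W_I`. -/
theorem stmt_2 {B W : Type*} [Group W] {M : CoxeterMatrix B} (cs : CoxeterSystem M W)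
    (H : Subgroup W) (hH : Finite ↥H) :
    ∃ (w : W) (I : Set B),
      Finite ↥(Subgroup.closure (cs.simple '' I)) ∧
      H ≤ (Subgroup.closure (cs.simple '' I)).map (MulAut.conj w).toMonoidHom := by
  have := Fintype.ofFinite H
  have hfin := cs.finite_sep_invariantFunctional_nonpos H
  obtain ⟨u, hu⟩ := cs.exists_forall_nonneg_apply_single (cs.invariantFunctional H)
    fun u => (hfin u).subset fun x hx => ⟨hx.1, hx.2.le⟩
  set f := cs.invariantFunctional H ∘ₗ (cs.geometricRepresentation u).toLinearMap
  refine ⟨u, {i | f (single i 1) = 0},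
    cs.finite_closure_simple f hu ((hfin u).subset fun x hx => ⟨hx.1, hx.2.le⟩),
    fun h hh => ⟨u⁻¹ * h * u, cs.mem_closure_simple_of_forall_apply_eq f hu fun x => ?_, ?_⟩⟩
  · simp [f, cs.invariantFunctional_geometricRepresentation H hh]
  · simp [mul_assoc]
end

section
/- (Richardson) Let (W,S) be a Coxeter system and let w ∈ W be an involution (w² = 1 and w ≠ 1). Then there exist a subset I ⊆ S with W_I finite and an element u ∈ W_I such that: u is the longest element of W_I (i.e., ℓ(v) ≤ ℓ(u) for all v ∈ W_I), u lies in the center of W_I, and w is conjugate to u in W. -/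
/-!
Let `v` be a conjugate of `w` of minimal length and `I` its set of left descents, which are also its
right descents because `v` is an involution. For `i ∈ I` either `s_i v s_i` is shorter than `v` or
`s_i` commutes with `v`; by minimality every such `s_i` commutes with `v`. A shortest element `x` of
`v W_I` satisfies `ℓ (x u) = ℓ x + ℓ u` on `W_I`, so a left descent `c` of `x` would be one of `v`;
then `s_c` commutes with `v` and `s_c x ∈ v W_I` is shorter than `x`. Hence `x = 1`, and `v ∈ W_I`
is central in `W_I`.

The length arguments run through the parity `η(w, t) ∈ ZMod 2` (`inversionParity`) of the number of
occurrences of `t` in the right inversion sequence of any word for `w`. It is well defined because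
it is read off the action of `W` on `W × ZMod 2` in which `s_i` acts by
`(t, z) ↦ (s_i t s_i, z + [t = s_i])`, and it is a cocycle: `η(a b, t) = η(b, t) + η(a, b t b⁻¹)`.
Moreover `η(w, t) = 1` exactly when `t` is a right inversion of `w`, so `w` has `ℓ w` right
inversions and is determined by them. Conjugation by `s_i`, `i ∈ I`, preserves `η(v, ·)`, so every
right inversion of an element `u` of `W_I` is one of `v`: hence `ℓ u ≤ ℓ v`, and
`u ↦ {right inversions of u}` embeds `W_I` into the power set of a finite set.
-/

theorem mul_mul_inv_eq_iff_eq_inv_mul_mul {G : Type*} [Group G] (g t x : G) :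
    g * t * g⁻¹ = x ↔ t = g⁻¹ * x * g := by
  constructor <;> rintro rfl <;> group

namespace CoxeterSystem

noncomputable section

open Classical

variable {B W : Type*} [Group W] {M : CoxeterMatrix B} (cs : CoxeterSystem M W)

local prefix:100 "s " => cs.simple
local prefix:100 "π " => cs.wordProd
local prefix:100 "ℓ " => cs.length
local prefix:100 "ris " => cs.rightInvSeq

def parityActionSimple (i : B) : Function.End (W × ZMod 2) :=
  fun x => (s i * x.1 * s i, x.2 + if x.1 = s i then 1 else 0)

theorem parityActionSimple_mul_pow (i j : B) (k : ℕ) (t : W) (z : ZMod 2) :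
    ((cs.parityActionSimple i * cs.parityActionSimple j) ^ k) (t, z) =
      ((s i * s j) ^ k * t * ((s i * s j) ^ k)⁻¹,
        z + ∑ l ∈ Finset.range (2 * k), if t = s j * (s i * s j) ^ l then 1 else 0) := by
  set p := s i * s j
  have hp : p⁻¹ * s j = s j * p := by simp only [p, mul_inv_rev, cs.inv_simple, mul_assoc]
  have hconj (l : ℕ) : p⁻¹ * (s j * p ^ l) * p = s j * p ^ (l + 1 + 1) := by
    rw [← mul_assoc p⁻¹, hp, mul_assoc (s j), mul_assoc (s j), ← pow_succ', ← pow_succ]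
  induction k generalizing t z with
  | zero => show (t, z) = _; simp
  | succ k ih =>
    change ((cs.parityActionSimple i * cs.parityActionSimple j) ^ k)
      (cs.parityActionSimple i (cs.parityActionSimple j (t, z))) = _
    simp only [parityActionSimple, ih]
    have hpt : s i * (s j * t * s j) * s i = p * t * p⁻¹ := by
      simp only [p, mul_inv_rev, cs.inv_simple, mul_assoc]
    have h0 : t = s j ↔ t = s j * p ^ 0 := by rw [pow_zero, mul_one]
    have h1 : s j * t * s j = s i ↔ t = s j * p ^ 1 := by
      nth_rewrite 2 [← cs.inv_simple j]
      rw [mul_mul_inv_eq_iff_eq_inv_mul_mul]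
      simp only [p, pow_one, cs.inv_simple, mul_assoc]
    have h2 (l : ℕ) : p * t * p⁻¹ = s j * p ^ l ↔ t = s j * p ^ (l + 1 + 1) := by
      rw [← hconj, mul_mul_inv_eq_iff_eq_inv_mul_mul]
    simp only [hpt, h0, h1, h2]
    refine Prod.ext (by rw [pow_succ]; group) ?_
    rw [Nat.mul_succ, Finset.sum_range_succ', Finset.sum_range_succ', zero_add]
    ac_rfl

theorem isLiftable_parityActionSimple : M.IsLiftable cs.parityActionSimple := by
  intro i j
  funext ⟨t, z⟩
  show _ = (t, z)
  rw [parityActionSimple_mul_pow, cs.simple_mul_simple_pow, two_mul, Finset.sum_range_add]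
  -- the terms for `l` and `l + M i j` agree, so the two halves of the sum cancel
  simp only [pow_add, cs.simple_mul_simple_pow, one_mul, CharTwo.add_self_eq_zero, add_zero]
  exact Prod.ext (by group) rfl

def parityAction : W →* Function.End (W × ZMod 2) :=
  cs.lift ⟨cs.parityActionSimple, cs.isLiftable_parityActionSimple⟩

theorem parityAction_simple (i : B) : cs.parityAction (s i) = cs.parityActionSimple i :=
  cs.lift_apply_simple cs.isLiftable_parityActionSimple i

theorem parityAction_wordProd (ω : List B) (t : W) (z : ZMod 2) :
    cs.parityAction (π ω) (t, z) = (π ω * t * (π ω)⁻¹, z + (ris ω).count t) := by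
  induction ω generalizing z with
  | nil =>
    rw [wordProd_nil, map_one]
    show (t, z) = _
    simp
  | cons i ω ih =>
    rw [wordProd_cons, map_mul]
    change cs.parityAction (s i) (cs.parityAction (π ω) (t, z)) = _
    rw [ih, parityAction_simple]
    simp only [parityActionSimple, rightInvSeq, List.count_cons, beq_iff_eq,
      mul_mul_inv_eq_iff_eq_inv_mul_mul, eq_comm (a := t), mul_inv_rev, cs.inv_simple]
    refine Prod.ext (by group) ?_
    push_cast
    ring

def inversionParity (w t : W) : ZMod 2 := (cs.parityAction w (t, 0)).2

theorem inversionParity_wordProd (ω : List B) (t : W) :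
    cs.inversionParity (π ω) t = (ris ω).count t := by
  rw [inversionParity, parityAction_wordProd, zero_add]

theorem parityAction_apply (w t : W) (z : ZMod 2) :
    cs.parityAction w (t, z) = (w * t * w⁻¹, z + cs.inversionParity w t) := by
  obtain ⟨ω, rfl⟩ := cs.wordProd_surjective w
  rw [parityAction_wordProd, inversionParity_wordProd]

theorem inversionParity_one (t : W) : cs.inversionParity 1 t = 0 := by
  simpa using cs.inversionParity_wordProd [] t

theorem inversionParity_mul (a b t : W) :
    cs.inversionParity (a * b) t =
      cs.inversionParity b t + cs.inversionParity a (b * t * b⁻¹) := by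
  rw [inversionParity, map_mul]
  change (cs.parityAction a (cs.parityAction b (t, 0))).2 = _
  simp only [parityAction_apply, zero_add]

theorem inversionParity_simple (i : B) (t : W) :
    cs.inversionParity (s i) t = if t = s i then 1 else 0 := by
  rw [inversionParity, parityAction_simple, parityActionSimple, zero_add]

theorem inversionParity_mul_simple (w : W) (i : B) (t : W) :
    cs.inversionParity (w * s i) t =
      (if t = s i then 1 else 0) + cs.inversionParity w (s i * t * s i) := by
  rw [inversionParity_mul, inversionParity_simple, cs.inv_simple]

theorem inversionParity_inv (a t : W) :
    cs.inversionParity a⁻¹ t = cs.inversionParity a (a⁻¹ * t * a) := by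
  have h := cs.inversionParity_mul a a⁻¹ t
  rwa [mul_inv_cancel, inversionParity_one, inv_inv, eq_comm, CharTwo.add_eq_zero] at h

theorem IsReflection.inversionParity_self {t : W} (ht : cs.IsReflection t) :
    cs.inversionParity t t = 1 := by
  obtain ⟨y, i, rfl⟩ := ht
  rw [inversionParity_mul, inversionParity_inv, inversionParity_mul, inversionParity_simple]
  have hyi : y⁻¹ * (y * s i * y⁻¹) * y = s i := by group
  simp only [inv_inv, hyi, if_pos, cs.inv_simple, cs.simple_mul_simple_self, one_mul]
  rw [add_left_comm, CharTwo.add_self_eq_zero, add_zero]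

theorem mem_rightInvSeq_of_inversionParity_eq_one {ω : List B} {t : W}
    (h : cs.inversionParity (π ω) t = 1) : t ∈ ris ω := by
  rw [inversionParity_wordProd] at h
  refine List.count_pos_iff.mp (Nat.pos_of_ne_zero fun h0 => ?_)
  rw [h0, Nat.cast_zero] at h
  exact zero_ne_one h

theorem isRightInversion_of_inversionParity_eq_one {w t : W} (h : cs.inversionParity w t = 1) :
    cs.IsRightInversion w t := by
  obtain ⟨ω, hω, rfl⟩ := cs.exists_isReduced w
  exact cs.isRightInversion_of_mem_rightInvSeq hω
    (cs.mem_rightInvSeq_of_inversionParity_eq_one h)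

theorem inversionParity_eq_one_iff {w t : W} :
    cs.inversionParity w t = 1 ↔ cs.IsRightInversion w t := by
  refine ⟨cs.isRightInversion_of_inversionParity_eq_one, fun ⟨ht, hlt⟩ => ?_⟩
  by_contra h
  have h0 : cs.inversionParity w t = 0 := by
    generalize cs.inversionParity w t = x at h; decide +revert
  have hwt : cs.inversionParity (w * t) t = 1 := by
    rw [inversionParity_mul, ht.inversionParity_self, mul_inv_cancel_right, h0, add_zero]
  have := (cs.isRightInversion_of_inversionParity_eq_one hwt).2
  rw [mul_assoc, ht.mul_self, mul_one] at this
  omega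

theorem inversionParity_eq_zero_iff {w t : W} :
    cs.inversionParity w t = 0 ↔ ¬cs.IsRightInversion w t := by
  rw [← inversionParity_eq_one_iff]
  generalize cs.inversionParity w t = x
  decide +revert

theorem IsReduced.isRightInversion_iff_mem_rightInvSeq {ω : List B} (hω : cs.IsReduced ω)
    {t : W} : cs.IsRightInversion (π ω) t ↔ t ∈ ris ω :=
  ⟨fun h => cs.mem_rightInvSeq_of_inversionParity_eq_one (cs.inversionParity_eq_one_iff.mpr h),
    cs.isRightInversion_of_mem_rightInvSeq hω⟩

theorem setOf_isRightInversion_eq_toFinset {ω : List B} (hω : cs.IsReduced ω) :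
    {t | cs.IsRightInversion (π ω) t} = (ris ω).toFinset := by
  ext t
  simp [hω.isRightInversion_iff_mem_rightInvSeq]

theorem finite_setOf_isRightInversion (w : W) : {t | cs.IsRightInversion w t}.Finite := by
  obtain ⟨ω, hω, rfl⟩ := cs.exists_isReduced w
  rw [setOf_isRightInversion_eq_toFinset cs hω]
  exact Finset.finite_toSet _

theorem ncard_setOf_isRightInversion (w : W) : {t | cs.IsRightInversion w t}.ncard = ℓ w := by
  obtain ⟨ω, hω, rfl⟩ := cs.exists_isReduced w
  rw [setOf_isRightInversion_eq_toFinset cs hω, Set.ncard_coe_finset,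
    List.toFinset_card_of_nodup hω.nodup_rightInvSeq, length_rightInvSeq, hω.eq]

theorem inversionParity_injective : Function.Injective cs.inversionParity := by
  intro u u' huu'
  induction hn : ℓ u using Nat.strong_induction_on generalizing u u' with
  | _ n ih =>
    by_cases hu : u = 1
    · subst hu
      by_contra hu'
      obtain ⟨i, hi⟩ := cs.exists_rightDescent_of_ne_one (Ne.symm hu')
      have := cs.inversionParity_eq_one_iff.mpr
        ((cs.isRightInversion_simple_iff_isRightDescent u' i).mpr hi)
      rw [← huu', inversionParity_one] at this
      exact zero_ne_one this
    obtain ⟨i, hi⟩ := cs.exists_rightDescent_of_ne_one hu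
    have hmul : cs.inversionParity (u * s i) = cs.inversionParity (u' * s i) := by
      funext t
      rw [inversionParity_mul_simple, inversionParity_mul_simple, huu']
    exact mul_right_cancel (ih _ (hn ▸ hi) hmul rfl)

theorem setOf_isRightInversion_injective :
    Function.Injective fun w => {t | cs.IsRightInversion w t} := by
  intro u u' h
  refine cs.inversionParity_injective (funext fun t => ?_)
  have ht : cs.IsRightInversion u t ↔ cs.IsRightInversion u' t := Set.ext_iff.mp h t
  rw [← inversionParity_eq_one_iff, ← inversionParity_eq_one_iff] at ht
  generalize cs.inversionParity u t = x at ht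
  generalize cs.inversionParity u' t = y at ht
  decide +revert

theorem length_simple_mul_mul_simple_lt_or_commute {v : W} {i : B} (hl : cs.IsLeftDescent v i)
    (hr : cs.IsRightDescent v i) : ℓ (s i * v * s i) < ℓ v ∨ s i * v = v * s i := by
  refine or_iff_not_imp_right.mpr fun hc => ?_
  have hconj : v * s i * v⁻¹ ≠ s i := fun h => hc (mul_inv_eq_iff_eq_mul.mp h).symm
  have hpar : cs.inversionParity (s i * v) (s i) = 1 := by
    rw [inversionParity_mul, inversionParity_simple, if_neg hconj, add_zero,
      cs.inversionParity_eq_one_iff, cs.isRightInversion_simple_iff_isRightDescent]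
    exact hr
  exact (cs.isRightInversion_of_inversionParity_eq_one hpar).2.trans hl

theorem inversionParity_simple_conj_of_commute {v : W} {i : B} (hc : s i * v = v * s i)
    (t : W) :
    cs.inversionParity v (s i * t * s i) = cs.inversionParity v t := by
  have h := congrArg (cs.inversionParity · t) hc
  simp only [inversionParity_mul, inversionParity_simple, mul_mul_inv_eq_iff_eq_inv_mul_mul,
    cs.inv_simple] at h
  rw [show v⁻¹ * s i * v = s i by rw [mul_assoc, hc, inv_mul_cancel_left], add_comm] at h
  exact (add_left_cancel h).symm

variable {I : Set B}

theorem not_isRightDescent_mul_of_forall_length_le {x u : W} {i : B}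
    (hx : ∀ u ∈ Subgroup.closure (cs.simple '' I), ℓ x ≤ ℓ (x * u))
    (hu : u ∈ Subgroup.closure (cs.simple '' I)) (hi : i ∈ I) (hui : ¬cs.IsRightDescent u i) :
    ¬cs.IsRightDescent (x * u) i := by
  have hconj : u * s i * u⁻¹ ∈ Subgroup.closure (cs.simple '' I) :=
    mul_mem (mul_mem hu (Subgroup.subset_closure ⟨i, hi, rfl⟩)) (inv_mem hu)
  rw [← isRightInversion_simple_iff_isRightDescent, ← inversionParity_eq_zero_iff] at hui ⊢
  rw [inversionParity_mul, hui, zero_add, inversionParity_eq_zero_iff]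
  exact fun h => (hx _ hconj).not_gt h.2

theorem length_mul_of_forall_length_le {x u : W}
    (hx : ∀ u ∈ Subgroup.closure (cs.simple '' I), ℓ x ≤ ℓ (x * u))
    (hu : u ∈ Subgroup.closure (cs.simple '' I)) : ℓ (x * u) = ℓ x + ℓ u := by
  have step : ∀ u ∈ Subgroup.closure (cs.simple '' I), ∀ i ∈ I,
      ℓ (x * u) = ℓ x + ℓ u → ℓ (x * (u * s i)) = ℓ x + ℓ (u * s i) := by
    intro u hu i hi ih
    have hxu := cs.length_mul_simple (x * u) i
    have hle := cs.length_mul_le x (u * s i)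
    rw [← mul_assoc] at hle ⊢
    rcases cs.length_mul_simple u i with hui | hui
    · have := cs.not_isRightDescent_mul_of_forall_length_le hx hu hi (by
        rw [IsRightDescent]; omega)
      rw [IsRightDescent] at this
      omega
    · omega
  induction hu using Subgroup.closure_induction_right with
  | one => simp
  | mul_right u hu _ hy ih =>
    obtain ⟨i, hi, rfl⟩ := hy
    exact step u hu i hi ih
  | mul_inv_cancel u hu _ hy ih =>
    obtain ⟨i, hi, rfl⟩ := hy
    rw [cs.inv_simple]
    exact step u hu i hi ih

theorem mem_closure_setOf_isLeftDescent {v : W}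
    (hcomm : ∀ i, cs.IsLeftDescent v i → s i * v = v * s i) :
    v ∈ Subgroup.closure (cs.simple '' {i | cs.IsLeftDescent v i}) := by
  set K := Subgroup.closure (cs.simple '' {i | cs.IsLeftDescent v i})
  obtain ⟨x, ⟨u₀, hu₀, rfl⟩, hmin⟩ := (measure cs.length).wf.has_min {x | ∃ u ∈ K, v * u = x}
    ⟨v, 1, one_mem K, mul_one v⟩
  have hxmin : ∀ u ∈ K, ℓ (v * u₀) ≤ ℓ (v * u₀ * u) := fun u hu =>
    not_lt.mp (hmin _ ⟨u₀ * u, mul_mem hu₀ hu, (mul_assoc ..).symm⟩)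
  have hv : ℓ v = ℓ (v * u₀) + ℓ u₀⁻¹ := by
    rw [← cs.length_mul_of_forall_length_le hxmin (inv_mem hu₀), mul_inv_cancel_right]
  suffices v * u₀ = 1 by
    rw [mul_eq_one_iff_eq_inv.mp this]; exact inv_mem hu₀
  by_contra hx
  obtain ⟨c, hc⟩ := cs.exists_leftDescent_of_ne_one hx
  have hcv : cs.IsLeftDescent v c := by
    have := cs.length_mul_le (s c * (v * u₀)) u₀⁻¹
    rw [show s c * (v * u₀) * u₀⁻¹ = s c * v by group] at this
    rw [IsLeftDescent] at hc ⊢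
    omega
  have hcx : s c * (v * u₀) = v * u₀ * (u₀⁻¹ * s c * u₀) := by
    rw [← mul_assoc, hcomm c hcv]; group
  have := hxmin _ (mul_mem (mul_mem (inv_mem hu₀) (Subgroup.subset_closure ⟨c, hcv, rfl⟩)) hu₀)
  rw [← hcx] at this
  rw [IsLeftDescent] at hc
  omega

theorem isRightInversion_of_mem_closure {v u t : W} (hcomm : ∀ i ∈ I, s i * v = v * s i)
    (hdesc : ∀ i ∈ I, cs.IsRightDescent v i) (hu : u ∈ Subgroup.closure (cs.simple '' I))
    (ht : cs.IsRightInversion u t) : cs.IsRightInversion v t := by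
  rw [← inversionParity_eq_one_iff] at ht ⊢
  have step : ∀ u, ∀ i ∈ I, (∀ t, cs.inversionParity u t = 1 → cs.inversionParity v t = 1) →
      ∀ t, cs.inversionParity (u * s i) t = 1 → cs.inversionParity v t = 1 := by
    intro u i hi ih t ht
    rw [inversionParity_mul_simple] at ht
    split_ifs at ht with hti
    · rw [hti, inversionParity_eq_one_iff, isRightInversion_simple_iff_isRightDescent]
      exact hdesc i hi
    · rw [zero_add] at ht
      rw [← cs.inversionParity_simple_conj_of_commute (hcomm i hi)]
      exact ih _ ht
  suffices h : ∀ t, cs.inversionParity u t = 1 → cs.inversionParity v t = 1 from h t ht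
  clear ht
  induction hu using Subgroup.closure_induction_right with
  | one => exact fun t ht => absurd (ht.symm.trans (cs.inversionParity_one t)) one_ne_zero
  | mul_right u _ _ hy ih =>
    obtain ⟨i, hi, rfl⟩ := hy
    exact step u i hi ih
  | mul_inv_cancel u _ _ hy ih =>
    obtain ⟨i, hi, rfl⟩ := hy
    rw [cs.inv_simple]
    exact step u i hi ih

theorem length_le_of_mem_closure {v u : W} (hcomm : ∀ i ∈ I, s i * v = v * s i)
    (hdesc : ∀ i ∈ I, cs.IsRightDescent v i) (hu : u ∈ Subgroup.closure (cs.simple '' I)) :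
    ℓ u ≤ ℓ v := by
  rw [← ncard_setOf_isRightInversion, ← ncard_setOf_isRightInversion]
  exact Set.ncard_le_ncard (fun t => cs.isRightInversion_of_mem_closure hcomm hdesc hu)
    (cs.finite_setOf_isRightInversion v)

theorem finite_closure_of_forall_commute {v : W} (hcomm : ∀ i ∈ I, s i * v = v * s i)
    (hdesc : ∀ i ∈ I, cs.IsRightDescent v i) : Finite (Subgroup.closure (cs.simple '' I)) := by
  refine Set.Finite.to_subtype (Set.Finite.subset
    ((cs.finite_setOf_isRightInversion v).finite_subsets.preimage
      cs.setOf_isRightInversion_injective.injOn) fun u hu => ?_)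
  exact fun t => cs.isRightInversion_of_mem_closure hcomm hdesc hu

end

end CoxeterSystem

open CoxeterSystem in
theorem stmt_7_general {B W : Type*} [Group W] {M : CoxeterMatrix B} (cs : CoxeterSystem M W)
    (w : W) (hw2 : w * w = 1) :
    ∃ (I : Set B) (u : W),
      Finite ↥(Subgroup.closure (cs.simple '' I)) ∧
      u ∈ Subgroup.closure (cs.simple '' I) ∧
      (∀ v ∈ Subgroup.closure (cs.simple '' I), cs.length v ≤ cs.length u) ∧
      (∀ v ∈ Subgroup.closure (cs.simple '' I), u * v = v * u) ∧
      IsConj w u := by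
  obtain ⟨v, hwv, hmin⟩ := (measure cs.length).wf.has_min {v | IsConj w v} ⟨w, IsConj.refl w⟩
  have hinv : v⁻¹ = v := by
    obtain ⟨c, rfl⟩ := isConj_iff.mp hwv
    simp only [mul_inv_rev, inv_inv, inv_eq_of_mul_eq_one_right hw2, mul_assoc]
  set I := {i | cs.IsLeftDescent v i}
  have hdesc : ∀ i ∈ I, cs.IsRightDescent v i := fun i hi => by
    rwa [← isLeftDescent_inv_iff, hinv]
  have hcomm : ∀ i ∈ I, cs.simple i * v = v * cs.simple i := fun i hi =>
    (cs.length_simple_mul_mul_simple_lt_or_commute hi (hdesc i hi)).resolve_left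
      (hmin _ (hwv.trans (isConj_iff.mpr ⟨cs.simple i, by rw [cs.inv_simple]⟩)))
  have hcentral : Subgroup.closure (cs.simple '' I) ≤ Subgroup.centralizer {v} :=
    (Subgroup.closure_le _).mpr fun _ ⟨i, hi, h⟩ =>
      Subgroup.mem_centralizer_singleton_iff.mpr (h ▸ hcomm i hi)
  exact ⟨I, v, cs.finite_closure_of_forall_commute hcomm hdesc,
    cs.mem_closure_setOf_isLeftDescent hcomm,
    fun u hu => cs.length_le_of_mem_closure hcomm hdesc hu,
    fun u hu => (Subgroup.mem_centralizer_singleton_iff.mp (hcentral hu)).symm, hwv⟩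

/-- (Richardson) Every involution in a Coxeter group is conjugate to the longest element
`u = w₀(I)` of a finite standard parabolic subgroup `W_I`, where moreover `u` is central
in `W_I`. -/
theorem stmt_7 {B W : Type*} [Group W] {M : CoxeterMatrix B} (cs : CoxeterSystem M W)
    (w : W) (hw2 : w * w = 1) (hw1 : w ≠ 1) :
    ∃ (I : Set B) (u : W),
      Finite ↥(Subgroup.closure (cs.simple '' I)) ∧
      u ∈ Subgroup.closure (cs.simple '' I) ∧
      (∀ v ∈ Subgroup.closure (cs.simple '' I), cs.length v ≤ cs.length u) ∧
      (∀ v ∈ Subgroup.closure (cs.simple '' I), u * v = v * u) ∧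
      IsConj w u :=
  stmt_7_general cs w hw2
end

section
/- Let (W,S) and (W',S') be Coxeter systems and let f : W → W' be a group isomorphism. If f(s) is a reflection of (W',S') for every s ∈ S (i.e., f(S) ⊆ S'^{W'}), then f maps the set of reflections of (W,S) onto the set of reflections of (W',S'): f(S^W) = S'^{W'}. -/
open Relation

namespace Stmt9Aux

variable {B' W' : Type*} [Group W'] {M' : CoxeterMatrix B'}

/-- If `M' c d` is oddated, the simple reflections `s c` and `s d` are conjugate. -/
lemma conj_of_odd (cs' : CoxeterSystem M' W') {c d : B'} (h : Odd (M'.M c d)) :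
    ∃ v : W', cs'.simple d = v * cs'.simple c * v⁻¹ := by
  obtain ⟨k, hk⟩ := h
  set a := cs'.simple c
  set b := cs'.simple d
  have hpow : (a * b) ^ (2 * k + 1) = 1 := by
    rw [← hk]; exact cs'.simple_mul_simple_pow c d
  have hinv : (a * b)⁻¹ = b * a := by
    rw [mul_inv_rev, cs'.inv_simple, cs'.inv_simple]
  refine ⟨(a * b) ^ k, ?_⟩
  have hsemi : SemiconjBy a (b * a) (a * b) := by
    unfold SemiconjBy; group
  have h2 : a * (b * a) ^ k = (a * b) ^ k * a := (hsemi.pow_right k).eq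
  have hvinv : ((a * b) ^ k)⁻¹ = (b * a) ^ k := by
    rw [← inv_pow, hinv]
  rw [hvinv, mul_assoc, h2, ← mul_assoc, ← pow_add]
  have h2k : (a * b) ^ (k + k) = b * a := by
    have : (a * b) ^ (2 * k + 1) = (a * b) ^ (k + k) * (a * b) := by
      rw [← pow_succ]; ring_nf
    have h3 : (a * b) ^ (k + k) * (a * b) = 1 := by rw [← this, hpow]
    have h4 := eq_inv_of_mul_eq_one_left h3
    rw [hinv] at h4
    exact h4
  rw [h2k, mul_assoc]
  have : a * a = 1 := cs'.simple_mul_simple_self c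
  rw [this, mul_one]

/-- Simple reflections connected by a chain of odd bonds are conjugate. -/
lemma conj_of_reflTransGen (cs' : CoxeterSystem M' W') {j c : B'}
    (h : ReflTransGen (fun a d => Odd (M'.M a d)) j c) :
    ∃ v : W', cs'.simple j = v * cs'.simple c * v⁻¹ := by
  induction h with
  | refl => exact ⟨1, by simp⟩
  | @tail b c hjb hbc ih =>
    obtain ⟨v, hv⟩ := ih
    obtain ⟨u, hu⟩ := conj_of_odd cs' (M'.symmetric b c ▸ hbc : Odd (M'.M c b))
    -- hu : s b = u * s c * u⁻¹
    refine ⟨v * u, ?_⟩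
    rw [hv, hu]; group

end Stmt9Aux

/-- If a group isomorphism `f` between two Coxeter groups sends every simple reflection of
`(W,S)` to a reflection of `(W',S')`, then `f` maps the set of reflections of `(W,S)` onto the
set of reflections of `(W',S')`. -/
theorem stmt_9 {B W B' W' : Type*} [Group W] [Group W']
    {M : CoxeterMatrix B} {M' : CoxeterMatrix B'}
    (cs : CoxeterSystem M W) (cs' : CoxeterSystem M' W')
    (f : W ≃* W') (hf : ∀ b : B, cs'.IsReflection (f (cs.simple b))) :
    ⇑f '' {w | cs.IsReflection w} = {w' | cs'.IsReflection w'} := by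
  classical
  have himg : ∀ t : W, cs.IsReflection t → cs'.IsReflection (f t) := by
    rintro t ⟨w, i, rfl⟩
    have := (hf i).conj (f w)
    simpa [map_mul, mul_assoc] using this
  -- key claim: each simple reflection of cs' is in the image of the reflections of cs
  have key : ∀ j : B', ∃ t : W, cs.IsReflection t ∧ f t = cs'.simple j := by
    intro j
    set adj : B' → B' → Prop := fun a d => Odd (M'.M a d) with hadj
    set x : B' → Multiplicative (ZMod 2) :=
      fun c => if Relation.ReflTransGen adj j c then Multiplicative.ofAdd 1 else 1 with hx
    have ysq : ∀ y : Multiplicative (ZMod 2), y * y = 1 := by decide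
    have hlift : CoxeterMatrix.IsLiftable M' x := by
      intro a c
      rcases Nat.even_or_odd (M'.M a c) with he | ho
      · obtain ⟨m, hm⟩ := he
        rw [hm, ← two_mul, pow_mul, pow_two, ysq, one_pow]
      · have hxac : x a = x c := by
          have hiff : Relation.ReflTransGen adj j a ↔ Relation.ReflTransGen adj j c := by
            constructor
            · intro h; exact h.tail (by exact ho)
            · intro h
              refine h.tail ?_
              show Odd (M'.M c a)
              rwa [M'.symmetric c a]
          simp only [hx]
          by_cases hja : Relation.ReflTransGen adj j a
          · rw [if_pos hja, if_pos (hiff.mp hja)]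
          · rw [if_neg hja, if_neg (fun h => hja (hiff.mpr h))]
        rw [hxac, ysq, one_pow]
    set χ : W' →* Multiplicative (ZMod 2) := cs'.lift ⟨x, hlift⟩ with hχ
    have hχs : ∀ c : B', χ (cs'.simple c) = x c := fun c => cs'.lift_apply_simple hlift c
    have hxj : x j = Multiplicative.ofAdd 1 := by
      simp only [hx]; rw [if_pos Relation.ReflTransGen.refl]
    have hne : (Multiplicative.ofAdd (1 : ZMod 2)) ≠ 1 := by decide
    -- there is a simple reflection of cs whose image has nontrivial χ
    have hex : ∃ b : B, χ (f (cs.simple b)) = Multiplicative.ofAdd 1 := by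
      by_contra hcon
      push_neg at hcon
      have hone : ∀ b : B, χ (f (cs.simple b)) = 1 := by
        intro b
        have : ∀ y : Multiplicative (ZMod 2), y ≠ Multiplicative.ofAdd 1 → y = 1 := by decide
        exact this _ (hcon b)
      have hall : ∀ w : W, χ (f w) = 1 := by
        intro w
        induction w using cs.simple_induction with
        | simple i => exact hone i
        | one => simp
        | mul w₁ w₂ h₁ h₂ => rw [map_mul, map_mul, h₁, h₂, one_mul]
      have := hall (f.symm (cs'.simple j))
      rw [f.apply_symm_apply, hχs, hxj] at this
      exact hne this
    obtain ⟨b, hb⟩ := hex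
    obtain ⟨w', c, hc⟩ := hf b
    -- χ (f (s b)) = x c
    have hxc : x c = Multiplicative.ofAdd 1 := by
      have : χ (f (cs.simple b)) = χ w' * χ (cs'.simple c) * (χ w')⁻¹ := by
        rw [hc, map_mul, map_mul, map_inv]
      rw [hb, hχs] at this
      rw [this, mul_comm (χ w'), mul_assoc, mul_inv_cancel, mul_one]
    have hreach : Relation.ReflTransGen adj j c := by
      by_contra h
      simp only [hx] at hxc
      rw [if_neg h] at hxc
      exact hne hxc.symm
    obtain ⟨v, hv⟩ := Stmt9Aux.conj_of_reflTransGen cs' hreach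
    -- s' j = v * s' c * v⁻¹ and s' c = w'⁻¹ * f (s b) * w'
    set u : W := f.symm (v * w'⁻¹) with hu
    refine ⟨u * cs.simple b * u⁻¹, (cs.isReflection_simple b).conj u, ?_⟩
    have hfu : f u = v * w'⁻¹ := f.apply_symm_apply _
    rw [map_mul, map_mul, map_inv, hfu, hc, hv]
    group
  apply Set.eq_of_subset_of_subset
  · rintro t' ⟨t, ht, rfl⟩
    exact himg t ht
  · rintro t' ⟨w', j, rfl⟩
    obtain ⟨t, ht, hft⟩ := key j
    set u : W := f.symm w' with hu
    refine ⟨u * t * u⁻¹, ht.conj u, ?_⟩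
    rw [map_mul, map_mul, map_inv, f.apply_symm_apply, hft]
end

section
/- Let (W,S) be a Coxeter system. The intersection of two parabolic subgroups of W is again a parabolic subgroup: if P₁ = w₁ W_{I₁} w₁⁻¹ and P₂ = w₂ W_{I₂} w₂⁻¹ for some w₁, w₂ ∈ W and I₁, I₂ ⊆ S, then there exist w ∈ W and I ⊆ S such that P₁ ∩ P₂ = w W_I w⁻¹. -/
/-!
Write `W_I` for the standard parabolic subgroup on `I`. Conjugating by `w₁⁻¹` reduces the claim
to `W_I ∩ u W_J u⁻¹`, and replacing `u` by an element `d` of minimal length in the double coset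
`W_I u W_J` changes this intersection only by a conjugation by an element of `W_I`. For such `d`,
Kilmoyer's theorem identifies `W_I ∩ d W_J d⁻¹` with `W_K`, where `K` is the set of `i ∈ I` with
`d⁻¹ s_i d = s_j` for some `j ∈ J`: by the strong exchange condition, applied to a reduced word
for `d` followed by a word for `v`, every left descent `s_i` (`i ∈ I`) of `x = d v d⁻¹ ∈ W_I` has
`i ∈ K`, and one inducts on the length of `x`.

The strong exchange condition comes from the action of `W` on `W × {±1}` in which `s_i` acts by
`(t, ε) ↦ (s_i t s_i, ±ε)`, the sign flipping exactly when `t = s_i`. The sign that `w` attaches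
to `(t, 1)` is the parity of the number of occurrences of `t` in the right inversion sequence of
any word for `w`, and it is `-1` exactly when `t` is a right inversion of `w`
(Björner–Brenti, *Combinatorics of Coxeter Groups*, §1.4).
-/

open Pointwise in
theorem Subgroup.conj_mul_smul_of_mem {G : Type*} [Group G] {H : Subgroup G} {a : G} (ha : a ∈ H)
    (x : G) : MulAut.conj (x * a) • H = MulAut.conj x • H := by
  rw [map_mul, mul_smul, Subgroup.conj_smul_eq_self_of_mem ha]

namespace CoxeterSystem

variable {B W : Type*} [Group W] {M : CoxeterMatrix B} (cs : CoxeterSystem M W)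

local prefix:100 "s " => cs.simple
local prefix:100 "π " => cs.wordProd
local prefix:100 "ℓ " => cs.length
local prefix:100 "ris " => cs.rightInvSeq
local prefix:100 "lis " => cs.leftInvSeq

theorem simple_mul_pow_simple_mul (i j : B) (k : ℕ) :
    s j * (s i * s j) ^ k = (s j * s i) ^ k * s j :=
  (SemiconjBy.pow_right (by simp [SemiconjBy, mul_assoc]) k : SemiconjBy (s j) _ _)

section SignedConjugation

open scoped Classical

noncomputable def simpleSignedConj (i : B) : Equiv.Perm (W × ℤˣ) :=
  Function.Involutive.toPerm (fun p => (s i * p.1 * s i, if p.1 = s i then -p.2 else p.2)) <| by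
    rintro ⟨w, ε⟩
    by_cases h : w = s i <;>
      simp [h, mul_assoc, mul_eq_one_iff_eq_inv]

theorem simpleSignedConj_apply (i : B) (w : W) (ε : ℤˣ) :
    cs.simpleSignedConj i (w, ε) = (s i * w * s i, if w = s i then -ε else ε) := rfl

theorem simpleSignedConj_mul_pow_apply (i j : B) (k : ℕ) (w : W) (ε : ℤˣ) :
    ((cs.simpleSignedConj i * cs.simpleSignedConj j) ^ k) (w, ε) =
      ((s i * s j) ^ k * w * (s j * s i) ^ k,
        ε * ∏ l ∈ Finset.range (2 * k), if w = (s j * s i) ^ l * s j then -1 else 1) := by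
  induction k with
  | zero => simp
  | succ k ih =>
    rw [pow_succ', Equiv.Perm.mul_apply, ih, Equiv.Perm.mul_apply, simpleSignedConj_apply,
      simpleSignedConj_apply]
    set c := (s i * s j) ^ k
    have hinv : c⁻¹ = (s j * s i) ^ k := by
      rw [← inv_pow, mul_inv_rev, inv_simple, inv_simple]
    have hconj : ∀ x, c * w * (s j * s i) ^ k = x ↔ w = (s j * s i) ^ k * x * c := by
      intro x
      rw [← hinv]
      constructor <;> rintro rfl <;> group
    have hj : c * w * (s j * s i) ^ k = s j ↔ w = (s j * s i) ^ (2 * k) * s j := by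
      rw [hconj, mul_assoc, simple_mul_pow_simple_mul, two_mul, pow_add, mul_assoc]
    have hi : s j * (c * w * (s j * s i) ^ k) * s j = s i ↔
        w = (s j * s i) ^ (2 * k + 1) * s j := by
      have hsj : ∀ x y, s j * x * s j = y ↔ x = s j * y * s j := by
        intro x y
        constructor <;> rintro rfl <;> simp [mul_assoc]
      have hc : (s j * s i) ^ k * (s j * s i * s j) * c = (s j * s i) ^ (2 * k + 1) * s j := by
        rw [mul_assoc, mul_assoc (s j * s i), simple_mul_pow_simple_mul, ← mul_assoc (s j * s i),
          ← pow_succ', ← mul_assoc, ← pow_add, two_mul, add_assoc]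
      rw [hsj, hconj, hc]
    refine Prod.ext ?_ ?_
    · rw [pow_succ' (s i * s j), pow_succ (s j * s i)]
      simp only [c, mul_assoc]
    · simp only [if_congr hj rfl rfl, if_congr hi rfl rfl]
      rw [show 2 * (k + 1) = 2 * k + 1 + 1 by ring, Finset.prod_range_succ, Finset.prod_range_succ]
      split_ifs <;> simp

theorem isLiftable_simpleSignedConj : M.IsLiftable cs.simpleSignedConj := by
  intro i j
  -- The reflections `(s j * s i) ^ l * s j` indexing the signs repeat with period `M i j`,
  -- so at `k = M i j` every sign occurs twice.
  ext ⟨w, ε⟩ : 1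
  rw [simpleSignedConj_mul_pow_apply, simple_mul_simple_pow, simple_mul_simple_pow', one_mul,
    mul_one, two_mul, Finset.prod_range_add]
  simp only [pow_add, simple_mul_simple_pow', one_mul, Int.units_mul_self, mul_one]
  rfl

noncomputable def signedConj : W →* Equiv.Perm (W × ℤˣ) :=
  cs.lift ⟨cs.simpleSignedConj, cs.isLiftable_simpleSignedConj⟩

theorem signedConj_wordProd (ω : List B) (t : W) (ε : ℤˣ) :
    cs.signedConj (π ω) (t, ε) = (π ω * t * (π ω)⁻¹, ε * (-1) ^ (ris ω).count t) := by
  induction ω with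
  | nil => simp
  | cons i ω ih =>
    rw [wordProd_cons, map_mul, Equiv.Perm.mul_apply, ih, signedConj, lift_apply_simple,
      simpleSignedConj_apply]
    have hcond : π ω * t * (π ω)⁻¹ = s i ↔ (π ω)⁻¹ * s i * π ω = t := by
      constructor <;> intro h <;> rw [← h] <;> group
    simp only [rightInvSeq, List.count_cons, if_congr hcond rfl rfl, beq_iff_eq, pow_add]
    refine Prod.ext (by rw [mul_inv_rev, inv_simple]; group) ?_
    split_ifs <;> simp

noncomputable def inversionSign (w t : W) : ℤˣ := (cs.signedConj w (t, 1)).2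

theorem inversionSign_wordProd (ω : List B) (t : W) :
    cs.inversionSign (π ω) t = (-1) ^ (ris ω).count t := by
  simp [inversionSign, signedConj_wordProd]

theorem signedConj_apply (w t : W) (ε : ℤˣ) :
    cs.signedConj w (t, ε) = (w * t * w⁻¹, ε * cs.inversionSign w t) := by
  obtain ⟨ω, rfl⟩ := cs.wordProd_surjective w
  rw [signedConj_wordProd, inversionSign_wordProd]

theorem inversionSign_mul (u v t : W) :
    cs.inversionSign (u * v) t = cs.inversionSign v t * cs.inversionSign u (v * t * v⁻¹) := by
  rw [inversionSign, map_mul, Equiv.Perm.mul_apply, signedConj_apply, signedConj_apply, one_mul]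

theorem inversionSign_one (t : W) : cs.inversionSign 1 t = 1 := by
  simp [inversionSign]

theorem inversionSign_simple_self (i : B) : cs.inversionSign (s i) (s i) = -1 := by
  simpa [rightInvSeq] using cs.inversionSign_wordProd [i] (s i)

theorem IsReflection.inversionSign_self {t : W} (ht : cs.IsReflection t) :
    cs.inversionSign t t = -1 := by
  obtain ⟨v, i, rfl⟩ := ht
  have hv : cs.inversionSign v⁻¹ (v * s i * v⁻¹) * cs.inversionSign v (s i) = 1 := by
    simpa [inversionSign_one, mul_assoc] using
      (cs.inversionSign_mul v v⁻¹ (v * s i * v⁻¹)).symm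
  have hconj : v⁻¹ * (v * s i * v⁻¹) * v⁻¹⁻¹ = s i := by group
  rw [inversionSign_mul, inversionSign_mul, hconj, inversionSign_simple_self, inv_simple,
    simple_mul_simple_self, one_mul, neg_one_mul, mul_neg, hv]

theorem mem_rightInvSeq_of_inversionSign_eq_neg_one {ω : List B} {t : W}
    (h : cs.inversionSign (π ω) t = -1) : t ∈ ris ω := by
  rw [inversionSign_wordProd] at h
  refine List.count_pos_iff.mp (Nat.pos_of_ne_zero fun h0 => ?_)
  rw [h0, pow_zero] at h
  exact absurd h (by decide)

theorem isRightInversion_of_inversionSign_eq_neg_one {w t : W}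
    (h : cs.inversionSign w t = -1) : cs.IsRightInversion w t := by
  obtain ⟨ω, hω, rfl⟩ := cs.exists_isReduced w
  exact cs.isRightInversion_of_mem_rightInvSeq hω (cs.mem_rightInvSeq_of_inversionSign_eq_neg_one h)

theorem IsRightInversion.inversionSign_eq_neg_one {w t : W} (h : cs.IsRightInversion w t) :
    cs.inversionSign w t = -1 := by
  obtain ⟨ht, hlt⟩ := h
  have hw : cs.inversionSign w t = -cs.inversionSign (w * t) t := by
    simpa [mul_assoc, ht.mul_self, ht.inv, ht.inversionSign_self] using
      cs.inversionSign_mul (w * t) t t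
  rcases Int.units_eq_one_or (cs.inversionSign (w * t) t) with h1 | h1
  · rw [hw, h1]
  · have := (cs.isRightInversion_of_inversionSign_eq_neg_one h1).2
    rw [mul_assoc, ht.mul_self, mul_one] at this
    omega

theorem IsRightInversion.mem_rightInvSeq {ω : List B} {t : W}
    (h : cs.IsRightInversion (π ω) t) : t ∈ ris ω :=
  cs.mem_rightInvSeq_of_inversionSign_eq_neg_one (h.inversionSign_eq_neg_one)

theorem IsLeftInversion.mem_leftInvSeq {ω : List B} {t : W}
    (h : cs.IsLeftInversion (π ω) t) : t ∈ lis ω := by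
  rw [← cs.isRightInversion_inv_iff, ← wordProd_reverse] at h
  simpa [rightInvSeq_reverse] using h.mem_rightInvSeq

end SignedConjugation

theorem IsLeftInversion.exists_wordProd_eraseIdx_eq {ω : List B} {t : W}
    (h : cs.IsLeftInversion (π ω) t) : ∃ j < ω.length, π (ω.eraseIdx j) = t * π ω := by
  obtain ⟨j, hj, rfl⟩ := List.getElem_of_mem h.mem_leftInvSeq
  refine ⟨j, by simpa using hj, ?_⟩
  rw [← getD_leftInvSeq_mul_wordProd, List.getD_eq_getElem]

theorem exists_sublist_isReduced_wordProd_eq (ω : List B) :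
    ∃ ω' : List B, ω'.Sublist ω ∧ cs.IsReduced ω' ∧ π ω' = π ω := by
  induction ω with
  | nil => exact ⟨[], List.Sublist.slnil, by simp [IsReduced], rfl⟩
  | cons i ω ih =>
    obtain ⟨ω', hsub, hred, heq⟩ := ih
    rcases cs.length_simple_mul (π ω') i with hlen | hlen
    · refine ⟨i :: ω', hsub.cons_cons i, ?_, by rw [wordProd_cons, wordProd_cons, heq]⟩
      rw [IsReduced, wordProd_cons, hlen, hred, List.length_cons]
    · obtain ⟨j, hj, hje⟩ := IsLeftInversion.exists_wordProd_eraseIdx_eq cs (ω := ω')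
        ⟨cs.isReflection_simple i, by omega⟩
      refine ⟨ω'.eraseIdx j, ((List.eraseIdx_sublist _ _).trans hsub).cons i, ?_, ?_⟩
      · rw [IsReduced, hje, List.length_eraseIdx_of_lt hj, ← hred]
        omega
      · rw [hje, heq, wordProd_cons]

abbrev standardParabolic (I : Set B) : Subgroup W := Subgroup.closure (cs.simple '' I)

section StandardParabolic

variable {I : Set B}

theorem simple_mem_standardParabolic {i : B} (hi : i ∈ I) : s i ∈ cs.standardParabolic I :=
  Subgroup.subset_closure ⟨i, hi, rfl⟩

theorem wordProd_mem_standardParabolic {ω : List B} (h : ∀ i ∈ ω, i ∈ I) :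
    π ω ∈ cs.standardParabolic I := by
  rw [wordProd]
  exact list_prod_mem (by simpa using fun i hi => cs.simple_mem_standardParabolic (h i hi))

theorem mem_standardParabolic_iff {w : W} :
    w ∈ cs.standardParabolic I ↔ ∃ ω : List B, (∀ i ∈ ω, i ∈ I) ∧ π ω = w := by
  refine ⟨fun hw => ?_, fun ⟨ω, hω, hw⟩ => hw ▸ cs.wordProd_mem_standardParabolic hω⟩
  induction hw using Subgroup.closure_induction with
  | mem x hx =>
    obtain ⟨i, hi, rfl⟩ := hx
    exact ⟨[i], by simpa using hi, cs.wordProd_singleton i⟩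
  | one => exact ⟨[], by simp, cs.wordProd_nil⟩
  | mul x y _ _ ihx ihy =>
    obtain ⟨ω₁, h₁, rfl⟩ := ihx
    obtain ⟨ω₂, h₂, rfl⟩ := ihy
    exact ⟨ω₁ ++ ω₂, by simpa [or_imp, forall_and] using And.intro h₁ h₂,
      cs.wordProd_append ω₁ ω₂⟩
  | inv x _ ihx =>
    obtain ⟨ω, h, rfl⟩ := ihx
    exact ⟨ω.reverse, by simpa using h, cs.wordProd_reverse ω⟩

theorem exists_isReduced_of_mem_standardParabolic {w : W} (hw : w ∈ cs.standardParabolic I) :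
    ∃ ω : List B, cs.IsReduced ω ∧ (∀ i ∈ ω, i ∈ I) ∧ π ω = w := by
  obtain ⟨ω, hω, rfl⟩ := cs.mem_standardParabolic_iff.mp hw
  obtain ⟨ω', hsub, hred, heq⟩ := cs.exists_sublist_isReduced_wordProd_eq ω
  exact ⟨ω', hred, fun i hi => hω i (hsub.subset hi), heq⟩

theorem exists_length_simple_mul_lt_of_mem_standardParabolic {w : W}
    (hw : w ∈ cs.standardParabolic I) (hne : w ≠ 1) :
    ∃ i ∈ I, ℓ (s i * w) < ℓ w ∧ s i * w ∈ cs.standardParabolic I := by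
  obtain ⟨_ | ⟨i, ω⟩, hred, hω, rfl⟩ := cs.exists_isReduced_of_mem_standardParabolic hw
  · exact absurd cs.wordProd_nil hne
  · refine ⟨i, hω i (by simp), ?_, ?_⟩ <;> rw [wordProd_cons, simple_mul_simple_cancel_left]
    · have hlen := cs.length_wordProd_le ω
      rw [← wordProd_cons, hred, List.length_cons]
      omega
    · exact cs.wordProd_mem_standardParabolic fun j hj => hω j (by simp [hj])

theorem exists_mem_eq_simple_of_length_eq_one {w : W} (hw : w ∈ cs.standardParabolic I)
    (hlen : ℓ w = 1) : ∃ i ∈ I, w = s i := by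
  obtain ⟨ω, hred, hω, rfl⟩ := cs.exists_isReduced_of_mem_standardParabolic hw
  rw [hred, List.length_eq_one_iff] at hlen
  obtain ⟨i, rfl⟩ := hlen
  exact ⟨i, hω i (by simp), cs.wordProd_singleton i⟩

end StandardParabolic

section MinimalCosetRepresentatives

open Pointwise

theorem exists_minimal_mem_doubleCoset (I J : Set B) (u : W) :
    ∃ a ∈ cs.standardParabolic I, ∃ b ∈ cs.standardParabolic J,
      ∀ a' ∈ cs.standardParabolic I, ∀ b' ∈ cs.standardParabolic J,
        ℓ (a * u * b) ≤ ℓ (a' * (a * u * b) * b') := by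
  obtain ⟨⟨a, b⟩, ⟨ha, hb⟩, hmin⟩ :=
    (InvImage.wf (fun p : W × W => ℓ (p.1 * u * p.2)) wellFounded_lt).has_min
      {p | p.1 ∈ cs.standardParabolic I ∧ p.2 ∈ cs.standardParabolic J}
      ⟨(1, 1), one_mem _, one_mem _⟩
  refine ⟨a, ha, b, hb, fun a' ha' b' hb' => ?_⟩
  simpa [InvImage, mul_assoc] using hmin (a' * a, b * b') ⟨mul_mem ha' ha, mul_mem hb hb'⟩

variable {I J : Set B}

theorem length_mul_eq_add_of_minimal_right {d v : W}
    (hd : ∀ b ∈ cs.standardParabolic J, ℓ d ≤ ℓ (d * b)) (hv : v ∈ cs.standardParabolic J) :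
    ℓ (d * v) = ℓ d + ℓ v := by
  obtain ⟨α, hα, rfl⟩ := cs.exists_isReduced d
  obtain ⟨β, hβ, rfl⟩ := cs.mem_standardParabolic_iff.mp hv
  obtain ⟨γ, hsub, hγ, heq⟩ := cs.exists_sublist_isReduced_wordProd_eq (α ++ β)
  -- By minimality of `d`, a reduced subword of `α ++ β` keeps all of `α`.
  obtain ⟨α', β', rfl, hα', hβ'⟩ := List.sublist_append_iff.mp hsub
  rw [IsReduced, heq, wordProd_append, List.length_append] at hγ
  rw [wordProd_append, wordProd_append] at heq
  have hβ'mem : π β' ∈ cs.standardParabolic J :=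
    cs.wordProd_mem_standardParabolic fun i hi => hβ i (hβ'.subset hi)
  have hα'len : α.length ≤ α'.length := calc
    α.length = ℓ (π α) := hα.symm
    _ ≤ ℓ (π α * (π β * (π β')⁻¹)) := hd _ (mul_mem hv (inv_mem hβ'mem))
    _ = ℓ (π α') := by rw [← mul_assoc, ← heq]; group
    _ ≤ α'.length := cs.length_wordProd_le α'
  obtain rfl := hα'.eq_of_length_le hα'len
  have hlen := cs.length_wordProd_le β'
  rw [mul_left_cancel heq] at hlen
  have := cs.length_mul_le (π α') (π β)
  have : ℓ (π α') = α'.length := hα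
  omega

theorem length_mul_eq_add_of_minimal_left {d a : W}
    (hd : ∀ b ∈ cs.standardParabolic I, ℓ d ≤ ℓ (b * d)) (ha : a ∈ cs.standardParabolic I) :
    ℓ (a * d) = ℓ a + ℓ d := by
  have hd' : ∀ b ∈ cs.standardParabolic I, ℓ d⁻¹ ≤ ℓ (d⁻¹ * b) := fun b hb => by
    rw [length_inv, ← length_inv _ (d⁻¹ * b), mul_inv_rev, inv_inv]
    exact hd _ (inv_mem hb)
  have := cs.length_mul_eq_add_of_minimal_right hd' (inv_mem ha)
  rw [← mul_inv_rev, length_inv, length_inv, length_inv] at this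
  omega

theorem exists_conj_simple_eq_of_minimal {d v : W} {i : B}
    (hmin : ∀ a ∈ cs.standardParabolic I, ∀ b ∈ cs.standardParabolic J, ℓ d ≤ ℓ (a * d * b))
    (hi : i ∈ I) (hv : v ∈ cs.standardParabolic J) (hlt : ℓ (s i * (d * v)) < ℓ (d * v)) :
    ∃ j ∈ J, d * s j * d⁻¹ = s i := by
  have hR : ∀ b ∈ cs.standardParabolic J, ℓ d ≤ ℓ (d * b) := fun b hb => by
    simpa using hmin 1 (one_mem _) b hb
  have hsd : ℓ (s i * d) = ℓ d + 1 := by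
    have := hmin (s i) (cs.simple_mem_standardParabolic hi) 1 (one_mem _)
    rw [mul_one] at this
    rcases cs.length_simple_mul d i with h | h <;> omega
  obtain ⟨α, hα, rfl⟩ := cs.exists_isReduced d
  obtain ⟨β, hβ, rfl⟩ := cs.mem_standardParabolic_iff.mp hv
  rw [← wordProd_append] at hlt
  obtain ⟨k, -, hk⟩ :=
    IsLeftInversion.exists_wordProd_eraseIdx_eq cs ⟨cs.isReflection_simple i, hlt⟩
  rw [wordProd_append] at hk
  -- The exchanged letter cannot lie in `α`, as `s i * d` is longer than `d`.
  rcases lt_or_ge k α.length with hkα | hkα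
  · rw [List.eraseIdx_append_of_lt_length hkα, wordProd_append, ← mul_assoc] at hk
    have := cs.length_wordProd_le (α.eraseIdx k)
    rw [mul_right_cancel hk, List.length_eraseIdx_of_lt hkα, hsd, ← hα] at this
    omega
  · rw [List.eraseIdx_append_of_length_le hkα, wordProd_append] at hk
    set y := π (β.eraseIdx (k - α.length)) * (π β)⁻¹
    have hy : y ∈ cs.standardParabolic J := mul_mem
      (cs.wordProd_mem_standardParabolic fun j hj => hβ j ((List.eraseIdx_sublist _ _).subset hj))
      (inv_mem hv)
    have hdy : π α * y = s i * π α := by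
      simp only [y, ← mul_assoc, hk]
      group
    have hy1 : ℓ y = 1 := by
      have := cs.length_mul_eq_add_of_minimal_right hR hy
      rw [hdy, hsd] at this
      omega
    obtain ⟨j, hj, hyj⟩ := cs.exists_mem_eq_simple_of_length_eq_one hy hy1
    exact ⟨j, hj, by rw [← hyj, hdy]; group⟩

theorem standardParabolic_inf_conj_smul_eq {d : W}
    (hmin : ∀ a ∈ cs.standardParabolic I, ∀ b ∈ cs.standardParabolic J, ℓ d ≤ ℓ (a * d * b)) :
    cs.standardParabolic I ⊓ MulAut.conj d • cs.standardParabolic J =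
      cs.standardParabolic {i | i ∈ I ∧ ∃ j ∈ J, d * s j * d⁻¹ = s i} := by
  set K := {i | i ∈ I ∧ ∃ j ∈ J, d * s j * d⁻¹ = s i}
  have hK : ∀ i ∈ K, s i ∈ cs.standardParabolic I ⊓ MulAut.conj d • cs.standardParabolic J :=
    fun i ⟨hi, j, hj, hij⟩ => ⟨cs.simple_mem_standardParabolic hi,
      (Subgroup.mem_smul_pointwise_iff_exists _ _ _).mpr
        ⟨s j, cs.simple_mem_standardParabolic hj, hij⟩⟩
  have hL : ∀ a ∈ cs.standardParabolic I, ℓ d ≤ ℓ (a * d) := fun a ha => by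
    simpa using hmin a ha 1 (one_mem _)
  refine le_antisymm ?_ ((Subgroup.closure_le _).mpr fun _ ⟨i, hi, hsi⟩ => hsi ▸ hK i hi)
  rintro x ⟨hxI, hxJ⟩
  induction hx : ℓ x using Nat.strong_induction_on generalizing x with
  | _ n ih =>
  obtain rfl | hne := eq_or_ne x 1
  · exact one_mem _
  obtain ⟨i, hi, hlt, hix⟩ :=
    cs.exists_length_simple_mul_lt_of_mem_standardParabolic hxI hne
  obtain ⟨v, hv, hvx⟩ := (Subgroup.mem_smul_pointwise_iff_exists _ _ _).mp hxJ
  have hdv : d * v = x * d := by rw [← hvx]; simp [MulAut.smul_def]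
  have hiK : i ∈ K := ⟨hi, cs.exists_conj_simple_eq_of_minimal hmin hi hv <| by
    rw [hdv, ← mul_assoc, cs.length_mul_eq_add_of_minimal_left hL hix,
      cs.length_mul_eq_add_of_minimal_left hL hxI]
    omega⟩
  have hsix : s i * x ∈ cs.standardParabolic K :=
    ih _ (hx ▸ hlt) hix (mul_mem (hK i hiK).2 hxJ) rfl
  simpa using mul_mem (cs.simple_mem_standardParabolic hiK) hsix

theorem exists_conj_smul_inf_conj_smul_eq (w₁ w₂ : W) (I₁ I₂ : Set B) :
    ∃ (w : W) (I : Set B), MulAut.conj w₁ • cs.standardParabolic I₁ ⊓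
      MulAut.conj w₂ • cs.standardParabolic I₂ = MulAut.conj w • cs.standardParabolic I := by
  obtain ⟨a, ha, b, hb, hmin⟩ := cs.exists_minimal_mem_doubleCoset I₁ I₂ (w₁⁻¹ * w₂)
  set d := a * (w₁⁻¹ * w₂) * b
  have h₁ : MulAut.conj w₁ • cs.standardParabolic I₁ =
      MulAut.conj (w₁ * a⁻¹) • cs.standardParabolic I₁ := by
    rw [← Subgroup.conj_mul_smul_of_mem ha (w₁ * a⁻¹), inv_mul_cancel_right]
  have h₂ : MulAut.conj w₂ • cs.standardParabolic I₂ =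
      MulAut.conj (w₁ * a⁻¹) • MulAut.conj d • cs.standardParabolic I₂ := by
    rw [← mul_smul, ← map_mul, ← Subgroup.conj_mul_smul_of_mem (inv_mem hb) (w₁ * a⁻¹ * d),
      show w₁ * a⁻¹ * d * b⁻¹ = w₂ by simp only [d]; group]
  rw [h₁, h₂, ← Subgroup.smul_inf, cs.standardParabolic_inf_conj_smul_eq hmin]
  exact ⟨_, _, rfl⟩

end MinimalCosetRepresentatives

end CoxeterSystem

/-- In a Coxeter system, the intersection of two parabolic subgroups (conjugates
`w₁ W_{I₁} w₁⁻¹` and `w₂ W_{I₂} w₂⁻¹` of standard parabolic subgroups) is again a parabolic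
subgroup. -/
theorem stmt_10 {B W : Type*} [Group W] {M : CoxeterMatrix B} (cs : CoxeterSystem M W)
    (w₁ w₂ : W) (I₁ I₂ : Set B) :
    ∃ (w : W) (I : Set B),
      (Subgroup.closure (cs.simple '' I₁)).map (MulAut.conj w₁).toMonoidHom ⊓
        (Subgroup.closure (cs.simple '' I₂)).map (MulAut.conj w₂).toMonoidHom =
      (Subgroup.closure (cs.simple '' I)).map (MulAut.conj w).toMonoidHom :=
  -- `MulAut.conj w • H` unfolds to `H.map (MulAut.conj w).toMonoidHom`.
  cs.exists_conj_smul_inf_conj_smul_eq w₁ w₂ I₁ I₂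
end

section
/- Let n ≥ 3 and let (W,S) be a Coxeter system of type A_n: S = {x₁, …, x_n} with m(x_i, x_{i+1}) = 3 for 1 ≤ i ≤ n−1 and m(x_i, x_j) = 2 whenever |i − j| ≥ 2. Then for each i ∈ {1,…,n}, the subgroup W^{⊥x_i} of W generated by all reflections t with t ≠ x_i and t x_i = x_i t is a Coxeter group of type A_{n−2}; in particular, W^{⊥x_i} is isomorphic to the symmetric group on n−1 letters. -/
/-!
The adjacent transpositions `(i i+1)` of `Fin (n + 1)` satisfy the type `Aₙ` relations, so
`x i ↦ (i i+1)` lifts to a surjection `W → S_{n+1}`. Writing `Wₖ = ⟨s₀, …, s_{k-1}⟩`, every element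
of `W_{k+1}` lies in `Wₖ · sₖ s_{k-1} ⋯ s_{k-j+1}` for some `j ≤ k + 1`, so `|W| ≤ (n + 1)!` and the
surjection is an isomorphism. It maps reflections to transpositions, and the transpositions other
than `τ = (a b)` that commute with `τ` are exactly those of the `n - 1` points outside `{a, b}`,
which generate their symmetric group.
-/

open Equiv Equiv.Perm Subgroup Pointwise
open scoped Nat

namespace Equiv.Perm

variable {α : Type*} [DecidableEq α]

theorem swap_mul_swap_pow_three {a b c : α} (hab : a ≠ b) (hac : a ≠ c) (hbc : b ≠ c) :
    (swap a b * swap a c) ^ 3 = 1 := by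
  have h₁ : swap a b * swap a c * swap a b = swap b c := by
    rw [swap_comm a c, swap_mul_swap_mul_swap hac.symm hbc.symm]
  have h₂ : swap a c * swap a b * swap a c = swap b c := by
    rw [swap_comm a b, swap_mul_swap_mul_swap hab.symm hbc, swap_comm]
  calc (swap a b * swap a c) ^ 3
      = swap a b * swap a c * swap a b * (swap a c * swap a b * swap a c) := by
        simp only [pow_succ, pow_zero, one_mul, mul_assoc]
    _ = 1 := by rw [h₁, h₂, swap_mul_self]

theorem swap_castSucc_succ_mul_pow_A {n : ℕ} (i j : Fin n) :
    (swap i.castSucc i.succ * swap j.castSucc j.succ) ^ CoxeterMatrix.A n i j = 1 := by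
  simp only [CoxeterMatrix.A, Matrix.of_apply]
  split_ifs with hij hadj
  · rw [hij, pow_one, swap_mul_self]
  · rcases hadj with h | h
    · rw [swap_comm j.castSucc, show j.succ = i.castSucc from Fin.ext (by simp [h])]
      exact swap_mul_swap_pow_three (by simp [Fin.ext_iff]) (by simp [Fin.ext_iff]; omega)
        (by simp [Fin.ext_iff]; omega)
    · rw [swap_comm i.castSucc, show i.succ = j.castSucc from Fin.ext (by simp [h])]
      exact swap_mul_swap_pow_three (by simp [Fin.ext_iff]; omega) (by simp [Fin.ext_iff])
        (by simp [Fin.ext_iff]; omega)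
  · have hdisj : Disjoint (swap i.castSucc i.succ) (swap j.castSucc j.succ) :=
      disjoint_swap_swap (by simp [Fin.ext_iff] at *; omega)
    rw [hdisj.commute.mul_pow, sq, sq, swap_mul_self, swap_mul_self, one_mul]

end Equiv.Perm

theorem Subgroup.closure_subset_mul {G : Type*} [Group G] {S : Set G} (hS : ∀ g ∈ S, g⁻¹ ∈ S)
    (H : Subgroup G) {C : Set G} (hC : 1 ∈ C) (hmul : ∀ c ∈ C, ∀ g ∈ S, c * g ∈ (H : Set G) * C) :
    (closure S : Set G) ⊆ H * C := by
  have key : ∀ x ∈ (H : Set G) * C, ∀ g ∈ S, x * g ∈ (H : Set G) * C := by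
    rintro _ ⟨h, hh, c, hc, rfl⟩ g hg
    obtain ⟨h', hh', c', hc', hcg⟩ := hmul c hc g hg
    exact ⟨h * h', mul_mem hh hh', c', hc', by dsimp only at hcg ⊢; rw [mul_assoc, hcg, mul_assoc]⟩
  intro w hw
  induction hw using closure_induction_right with
  | one => exact ⟨1, H.one_mem, 1, hC, one_mul 1⟩
  | mul_right _ _ g hg ih => exact key _ ih g hg
  | mul_inv_cancel _ _ g hg ih => exact key _ ih _ (hS g hg)

section CosetEnumeration

variable {G : Type*} [Group G]

def descProd (s : ℕ → G) (k : ℕ) : ℕ → G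
  | 0 => 1
  | j + 1 => descProd s k j * s (k - j)

variable {s : ℕ → G} {n k : ℕ}

theorem descProd_commute (hcomm : ∀ t u, t + 2 ≤ u → u < n → Commute (s t) (s u)) (hk : k < n)
    {j t : ℕ} (h : t + j + 1 ≤ k) : Commute (descProd s k j) (s t) := by
  induction j with
  | zero => exact Commute.one_left _
  | succ j ih => exact (ih (by omega)).mul_left (hcomm t (k - j) (by omega) (by omega)).symm

theorem descProd_mul_eq_mul_descProd
    (hbraid : ∀ t, t + 1 < n → s t * s (t + 1) * s t = s (t + 1) * s t * s (t + 1))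
    (hcomm : ∀ t u, t + 2 ≤ u → u < n → Commute (s t) (s u)) (hk : k < n)
    {j m : ℕ} (hm : m < k) (hj : k + 1 ≤ m + j) (hjk : j ≤ k + 1) :
    descProd s k j * s (m + 1) = s m * descProd s k j := by
  obtain ⟨i, rfl⟩ : ∃ i, j = k - m + 1 + i := ⟨j - (k - m + 1), by omega⟩
  induction i with
  | zero =>
    have hunfold : descProd s k (k - m + 1 + 0) = descProd s k (k - m - 1) * s (m + 1) * s m := by
      rw [show k - m + 1 + 0 = k - m - 1 + 1 + 1 by omega, descProd, descProd,
        show k - (k - m - 1) = m + 1 by omega, show k - (k - m - 1 + 1) = m by omega]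
    have hc : Commute (descProd s k (k - m - 1)) (s m) := descProd_commute hcomm hk (by omega)
    rw [hunfold]
    calc _ = descProd s k (k - m - 1) * (s (m + 1) * s m * s (m + 1)) := by
          simp only [mul_assoc]
      _ = descProd s k (k - m - 1) * s m * s (m + 1) * s m := by
          rw [← hbraid m (by omega)]; simp only [mul_assoc]
      _ = s m * (descProd s k (k - m - 1) * s (m + 1) * s m) := by
          rw [hc.eq]; simp only [mul_assoc]
  | succ i ih =>
    have hc : Commute (s (k - (k - m + 1 + i))) (s (m + 1)) := hcomm _ _ (by omega) (by omega)
    rw [← add_assoc, descProd, mul_assoc, hc.eq, ← mul_assoc, ih (by omega) (by omega), mul_assoc]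

theorem descProd_mul_mem (hinv : ∀ t < n, s t * s t = 1)
    (hbraid : ∀ t, t + 1 < n → s t * s (t + 1) * s t = s (t + 1) * s t * s (t + 1))
    (hcomm : ∀ t u, t + 2 ≤ u → u < n → Commute (s t) (s u)) (hk : k < n)
    {j t : ℕ} (hj : j ≤ k + 1) (ht : t ≤ k) :
    descProd s k j * s t ∈
      (closure (s '' Set.Iio k) : Set G) * Set.range fun i : Fin (k + 2) => descProd s k i := by
  have mem : ∀ u ∈ closure (s '' Set.Iio k), ∀ i ≤ k + 1,
      u * descProd s k i ∈ (closure (s '' Set.Iio k) : Set G) *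
        Set.range fun i : Fin (k + 2) => descProd s k i :=
    fun u hu i hi => Set.mul_mem_mul hu ⟨⟨i, by omega⟩, rfl⟩
  have gen : ∀ t < k, s t ∈ closure (s '' Set.Iio k) := fun t ht => subset_closure ⟨t, ht, rfl⟩
  by_cases h₁ : t + j + 1 ≤ k
  · rw [(descProd_commute hcomm hk h₁).eq]
    exact mem _ (gen t (by omega)) j hj
  by_cases h₂ : t + j = k
  · have : descProd s k j * s t = 1 * descProd s k (j + 1) := by
      rw [one_mul, descProd, show k - j = t by omega]
    exact this ▸ mem 1 (one_mem _) (j + 1) (by omega)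
  by_cases h₃ : t + j = k + 1
  · obtain ⟨j, rfl⟩ : ∃ j', j = j' + 1 := ⟨j - 1, by omega⟩
    have : descProd s k (j + 1) * s t = 1 * descProd s k j := by
      rw [one_mul, descProd, show k - j = t by omega, mul_assoc, hinv t (by omega), mul_one]
    exact this ▸ mem 1 (one_mem _) j (by omega)
  obtain ⟨m, rfl⟩ : ∃ m, t = m + 1 := ⟨t - 1, by omega⟩
  rw [descProd_mul_eq_mul_descProd hbraid hcomm hk (by omega) (by omega) hj]
  exact mem _ (gen m (by omega)) j hj

theorem finite_and_card_closure_image_Iio_le_factorial (hinv : ∀ t < n, s t * s t = 1)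
    (hbraid : ∀ t, t + 1 < n → s t * s (t + 1) * s t = s (t + 1) * s t * s (t + 1))
    (hcomm : ∀ t u, t + 2 ≤ u → u < n → Commute (s t) (s u)) (hk : k ≤ n) :
    Finite (closure (s '' Set.Iio k)) ∧ Nat.card (closure (s '' Set.Iio k)) ≤ (k + 1)! := by
  induction k with
  | zero =>
    rw [show s '' Set.Iio 0 = ∅ by simp, Subgroup.closure_empty, card_bot]
    exact ⟨inferInstance, le_rfl⟩
  | succ k ih =>
    obtain ⟨hfin, hcard⟩ := ih (by omega)
    set C := Set.range fun i : Fin (k + 2) => descProd s k i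
    have hsub : (closure (s '' Set.Iio (k + 1)) : Set G) ⊆ closure (s '' Set.Iio k) * C := by
      refine closure_subset_mul ?_ _ ⟨0, rfl⟩ ?_
      · rintro _ ⟨t, ht, rfl⟩
        exact ⟨t, ht, (inv_eq_of_mul_eq_one_right (hinv t (by simp at ht; omega))).symm⟩
      · rintro _ ⟨i, rfl⟩ _ ⟨t, ht, rfl⟩
        exact descProd_mul_mem hinv hbraid hcomm hk (by omega) (by simp at ht; omega)
    have hfin' : ((closure (s '' Set.Iio k) : Set G) * C).Finite :=
      (Set.toFinite _).mul (Set.finite_range _)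
    refine ⟨(hfin'.subset hsub).to_subtype, ?_⟩
    calc Nat.card (closure (s '' Set.Iio (k + 1)))
        ≤ Nat.card ↥((closure (s '' Set.Iio k) : Set G) * C) := Nat.card_mono hfin' hsub
      _ ≤ Nat.card (closure (s '' Set.Iio k)) * Nat.card C := Set.natCard_mul_le
      _ ≤ (k + 1)! * (k + 2) :=
          Nat.mul_le_mul hcard ((Finite.card_range_le _).trans (Nat.card_fin _).le)
      _ = (k + 2)! := by rw [Nat.factorial_succ (k + 1)]; ring

end CosetEnumeration

theorem CoxeterMatrix.apply_eq_A {B : Type*} {M : CoxeterMatrix B} {n : ℕ} {x : Fin n → B}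
    (hm1 : ∀ i j : Fin n, (i : ℕ) + 1 = (j : ℕ) → M (x i) (x j) = 3)
    (hm2 : ∀ i j : Fin n, (i : ℕ) + 2 ≤ (j : ℕ) → M (x i) (x j) = 2) (i j : Fin n) :
    M (x i) (x j) = CoxeterMatrix.A n i j := by
  simp only [CoxeterMatrix.A, Matrix.of_apply]
  split_ifs with hij hadj
  · rw [hij, M.diagonal]
  · rcases hadj with h | h
    · rw [M.symmetric]; exact hm1 j i h
    · exact hm1 i j h
  · have hij' : (i : ℕ) ≠ j := fun h => hij (Fin.ext h)
    rcases Nat.lt_or_gt_of_ne hij' with h | h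
    · exact hm2 i j (by omega)
    · rw [M.symmetric]; exact hm2 j i (by omega)

namespace CoxeterSystem

variable {B W : Type*} [Group W] {M : CoxeterMatrix B} (cs : CoxeterSystem M W)

theorem simple_mul_simple_mul_simple_of_eq_three {i i' : B} (h : M i i' = 3) :
    cs.simple i * cs.simple i' * cs.simple i = cs.simple i' * cs.simple i * cs.simple i' := by
  have := cs.wordProd_braidWord_eq i i'
  simp only [braidWord, M.symmetric i' i, h, alternatingWord, wordProd] at this
  simpa [mul_assoc] using this.symm

theorem commute_simple_of_eq_two {i i' : B} (h : M i i' = 2) :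
    Commute (cs.simple i) (cs.simple i') := by
  have := cs.wordProd_braidWord_eq i i'
  simp only [braidWord, M.symmetric i' i, h, alternatingWord, wordProd] at this
  simpa [Commute, SemiconjBy] using this

theorem isReflection_iff_isSwap {α : Type*} [DecidableEq α] [Nonempty B] (E : W ≃* Perm α)
    (hE : ∀ b, (E (cs.simple b)).IsSwap) (w : W) : cs.IsReflection w ↔ (E w).IsSwap := by
  constructor
  · rintro ⟨u, b, rfl⟩
    obtain ⟨p, q, hpq, hb⟩ := hE b
    refine ⟨E u p, E u q, (E u).injective.ne hpq, ?_⟩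
    rw [map_mul, map_mul, map_inv, hb, swap_apply_apply]
  · rintro ⟨c, d, hcd, hw⟩
    obtain ⟨b⟩ := ‹Nonempty B›
    obtain ⟨p, q, hpq, hb⟩ := hE b
    obtain ⟨g, hg⟩ := isConj_iff.mp (isConj_swap hpq hcd)
    refine ⟨E.symm g, b, E.injective ?_⟩
    rw [map_mul, map_mul, map_inv, E.apply_symm_apply, hb, hg, hw]

theorem finite_and_card_le_factorial (cs : CoxeterSystem M W) {n : ℕ} {x : Fin n → B}
    (hx : Function.Surjective x) (hM : ∀ i j, M (x i) (x j) = CoxeterMatrix.A n i j) :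
    Finite W ∧ Nat.card W ≤ (n + 1)! := by
  let s : ℕ → W := fun t => if h : t < n then cs.simple (x ⟨t, h⟩) else 1
  have hs : ∀ t (h : t < n), s t = cs.simple (x ⟨t, h⟩) := fun t h => dif_pos h
  have hinv : ∀ t < n, s t * s t = 1 := fun t h => by rw [hs t h, simple_mul_simple_self]
  have hbraid : ∀ t, t + 1 < n → s t * s (t + 1) * s t = s (t + 1) * s t * s (t + 1) := by
    intro t h
    rw [hs t (by omega), hs (t + 1) h]
    refine cs.simple_mul_simple_mul_simple_of_eq_three ?_
    rw [hM]; simp [CoxeterMatrix.A]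
  have hcomm : ∀ t u, t + 2 ≤ u → u < n → Commute (s t) (s u) := by
    intro t u htu hu
    rw [hs t (by omega), hs u hu]
    refine cs.commute_simple_of_eq_two ?_
    rw [hM]; simp only [CoxeterMatrix.A, Matrix.of_apply, Fin.ext_iff]; split_ifs <;> omega
  have htop : closure (s '' Set.Iio n) = ⊤ := by
    rw [← cs.subgroup_closure_range_simple]
    congr 1
    ext w
    constructor
    · rintro ⟨t, ht, rfl⟩; exact ⟨_, (hs t ht).symm⟩
    · rintro ⟨b, rfl⟩
      obtain ⟨t, rfl⟩ := hx b
      exact ⟨t, t.2, hs t t.2⟩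
  obtain ⟨hfin, hcard⟩ := finite_and_card_closure_image_Iio_le_factorial hinv hbraid hcomm le_rfl
  rw [htop] at hfin hcard
  exact ⟨Finite.of_equiv _ topEquiv.toEquiv, card_top (G := W) ▸ hcard⟩

theorem exists_mulEquiv_perm {n : ℕ} {x : Fin n → B} (hx : Function.Bijective x)
    (hM : ∀ i j, M (x i) (x j) = CoxeterMatrix.A n i j) :
    ∃ E : W ≃* Perm (Fin (n + 1)), ∀ i, E (cs.simple (x i)) = swap i.castSucc i.succ := by
  let e := Equiv.ofBijective x hx
  let f : B → Perm (Fin (n + 1)) := fun b => swap (e.symm b).castSucc (e.symm b).succ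
  have hf : ∀ i, f (x i) = swap i.castSucc i.succ := fun i => by
    simp only [f, e, Equiv.ofBijective_symm_apply_apply]
  have hlift : M.IsLiftable f := by
    intro b b'
    obtain ⟨i, rfl⟩ := hx.2 b
    obtain ⟨j, rfl⟩ := hx.2 b'
    rw [hf, hf, hM]
    exact swap_castSucc_succ_mul_pow_A i j
  let toPerm := cs.lift ⟨f, hlift⟩
  have htoPerm : ∀ i, toPerm (cs.simple (x i)) = swap i.castSucc i.succ := fun i => by
    rw [cs.lift_apply_simple, hf]
  have hsurj : Function.Surjective toPerm := by
    refine MonoidHom.mrange_eq_top.mp (top_le_iff.mp ?_)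
    rw [← mclosure_swap_castSucc_succ, Submonoid.closure_le]
    rintro _ ⟨i, rfl⟩
    exact ⟨_, htoPerm i⟩
  obtain ⟨hfin, hcard⟩ := cs.finite_and_card_le_factorial hx.2 hM
  have hbij : Function.Bijective toPerm := (Nat.bijective_iff_surjective_and_card toPerm).mpr
    ⟨hsurj, le_antisymm (hcard.trans_eq (by rw [Nat.card_perm, Nat.card_fin]))
      (Nat.card_le_card_of_surjective toPerm hsurj)⟩
  exact ⟨MulEquiv.ofBijective toPerm hbij, htoPerm⟩

end CoxeterSystem

namespace Equiv

variable {α : Type*} [DecidableEq α]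

theorem eq_of_swap_mul_swap_eq_swap_mul_swap {a b c : α} (hab : a ≠ b) (hac : a ≠ c)
    (h : swap a b * swap a c = swap a c * swap a b) : b = c := by
  by_contra hbc
  have := congr($h a)
  simp only [Perm.mul_apply, swap_apply_left, swap_apply_of_ne_of_ne hac.symm (Ne.symm hbc),
    swap_apply_of_ne_of_ne hab.symm hbc] at this
  exact hbc this.symm

theorem ne_of_swap_mul_swap_eq_swap_mul_swap {a b c d : α} (hab : a ≠ b) (hcd : c ≠ d)
    (hne : swap c d ≠ swap a b) (h : swap c d * swap a b = swap a b * swap c d) :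
    c ≠ a ∧ c ≠ b := by
  constructor <;> rintro rfl
  · exact hne (by rw [eq_of_swap_mul_swap_eq_swap_mul_swap hcd hab h])
  · rw [swap_comm a c] at h hne
    exact hne (by rw [eq_of_swap_mul_swap_eq_swap_mul_swap hcd hab.symm h])

namespace Perm

theorem setOf_isSwap_commute_swap_eq_image_ofSubtype {a b : α} (hab : a ≠ b) :
    {σ : Perm α | σ.IsSwap ∧ σ ≠ swap a b ∧ σ * swap a b = swap a b * σ} =
      ofSubtype '' {τ : Perm {y // y ∉ ({a, b} : Finset α)} | τ.IsSwap} := by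
  ext σ
  constructor
  · rintro ⟨⟨c, d, hcd, rfl⟩, hne, h⟩
    obtain ⟨hca, hcb⟩ := ne_of_swap_mul_swap_eq_swap_mul_swap hab hcd hne h
    rw [swap_comm c d] at hne h
    obtain ⟨hda, hdb⟩ := ne_of_swap_mul_swap_eq_swap_mul_swap hab hcd.symm hne h
    refine ⟨swap ⟨c, by simp [hca, hcb]⟩ ⟨d, by simp [hda, hdb]⟩,
      ⟨_, _, fun h => hcd (congrArg Subtype.val h), rfl⟩, ofSubtype_swap_eq _ _⟩
  · rintro ⟨τ, ⟨u, v, huv, rfl⟩, rfl⟩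
    have hu : (u : α) ≠ a ∧ (u : α) ≠ b := by simpa [not_or] using u.2
    have hv : (v : α) ≠ a ∧ (v : α) ≠ b := by simpa [not_or] using v.2
    rw [ofSubtype_swap_eq]
    refine ⟨⟨u, v, Subtype.coe_ne_coe.mpr huv, rfl⟩, fun h => ?_, ?_⟩
    · have := congr($h a)
      rw [swap_apply_left, swap_apply_of_ne_of_ne hu.1.symm hv.1.symm] at this
      exact hab this
    · refine (Disjoint.commute fun y => ?_).eq
      by_cases hy : y = u ∨ y = v
      · right; rcases hy with rfl | rfl
        exacts [swap_apply_of_ne_of_ne hu.1 hu.2, swap_apply_of_ne_of_ne hv.1 hv.2]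
      · left; simp only [not_or] at hy; exact swap_apply_of_ne_of_ne hy.1 hy.2

theorem closure_setOf_isSwap_commute_swap [Finite α] {a b : α} (hab : a ≠ b) :
    Subgroup.closure {σ : Perm α | σ.IsSwap ∧ σ ≠ swap a b ∧ σ * swap a b = swap a b * σ} =
      (ofSubtype : Perm {y // y ∉ ({a, b} : Finset α)} →* Perm α).range := by
  rw [setOf_isSwap_commute_swap_eq_image_ofSubtype hab, ← MonoidHom.map_closure, closure_isSwap,
    MonoidHom.range_eq_map]

theorem nonempty_mulEquiv_closure_setOf_isSwap_commute_swap [Fintype α] {a b : α} (hab : a ≠ b)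
    {m : ℕ} (hm : Fintype.card α = m + 2) :
    Nonempty (Subgroup.closure
      {σ : Perm α | σ.IsSwap ∧ σ ≠ swap a b ∧ σ * swap a b = swap a b * σ} ≃* Perm (Fin m)) := by
  have hcard : Fintype.card {y // y ∉ ({a, b} : Finset α)} = m := by
    rw [Fintype.card_subtype_compl, Fintype.card_coe, Finset.card_pair hab, hm,
      Nat.add_sub_cancel]
  rw [closure_setOf_isSwap_commute_swap hab]
  exact ⟨(MonoidHom.ofInjective ofSubtype_injective).symm.trans
    (permCongrHom (Fintype.equivFinOfCardEq hcard))⟩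

end Perm

end Equiv

theorem stmt_18_general {B W : Type*} [Group W] {M : CoxeterMatrix B} (cs : CoxeterSystem M W)
    (n : ℕ) (x : Fin n → B) (hx : Function.Bijective x)
    (hm1 : ∀ i j : Fin n, (i : ℕ) + 1 = (j : ℕ) → M (x i) (x j) = 3)
    (hm2 : ∀ i j : Fin n, (i : ℕ) + 2 ≤ (j : ℕ) → M (x i) (x j) = 2) :
    ∀ i : Fin n,
      Nonempty ((Subgroup.closure {t : W | cs.IsReflection t ∧ t ≠ cs.simple (x i) ∧
          t * cs.simple (x i) = cs.simple (x i) * t}) ≃* Equiv.Perm (Fin (n - 1))) := by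
  intro i
  obtain ⟨E, hE⟩ := cs.exists_mulEquiv_perm hx (CoxeterMatrix.apply_eq_A hm1 hm2)
  have : Nonempty B := ⟨x i⟩
  have hrefl := cs.isReflection_iff_isSwap E fun b => by
    obtain ⟨j, rfl⟩ := hx.2 b
    exact hE j ▸ ⟨_, _, Fin.castSucc_lt_succ.ne, rfl⟩
  have himage : E '' {t : W | cs.IsReflection t ∧ t ≠ cs.simple (x i) ∧
      t * cs.simple (x i) = cs.simple (x i) * t} =
      {σ | σ.IsSwap ∧ σ ≠ swap i.castSucc i.succ ∧
        σ * swap i.castSucc i.succ = swap i.castSucc i.succ * σ} := by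
    ext σ
    obtain ⟨w, rfl⟩ := E.surjective σ
    simp only [E.injective.mem_set_image, Set.mem_ofPred_eq, hrefl, ← hE i, ← map_mul,
      E.injective.eq_iff, E.injective.ne_iff]
  obtain ⟨F⟩ := nonempty_mulEquiv_closure_setOf_isSwap_commute_swap (m := n - 1)
    (Fin.castSucc_lt_succ (i := i)).ne (by rw [Fintype.card_fin]; have := i.pos; omega)
  refine ⟨(E.subgroupMap _).trans ((MulEquiv.subgroupCongr ?_).trans F)⟩
  rw [MonoidHom.map_closure]
  exact congrArg Subgroup.closure himage

/-- Let `n ≥ 3` and let `(W,S)` be a Coxeter system of type `Aₙ`: the generators are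
`x 0, …, x (n-1)` (a bijective enumeration of `S`) with `m(x i, x j) = 3` for `j = i + 1` and
`m(x i, x j) = 2` for `j ≥ i + 2`.  Then for each generator `x i`, the subgroup `W^{⊥ x i}`
generated by all reflections `t ≠ x i` commuting with `x i` is isomorphic to the symmetric
group on `n - 1` letters (it is a Coxeter group of type `A_{n-2}`). -/
theorem stmt_18 {B W : Type*} [Group W] {M : CoxeterMatrix B} (cs : CoxeterSystem M W)
    (n : ℕ) (hn : 3 ≤ n) (x : Fin n → B) (hx : Function.Bijective x)
    (hm1 : ∀ i j : Fin n, (i : ℕ) + 1 = (j : ℕ) → M (x i) (x j) = 3)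
    (hm2 : ∀ i j : Fin n, (i : ℕ) + 2 ≤ (j : ℕ) → M (x i) (x j) = 2) :
    ∀ i : Fin n,
      Nonempty ((Subgroup.closure {t : W | cs.IsReflection t ∧ t ≠ cs.simple (x i) ∧
          t * cs.simple (x i) = cs.simple (x i) * t}) ≃* Equiv.Perm (Fin (n - 1))) :=
  stmt_18_general cs n x hx hm1 hm2
end
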